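/- arXiv:2312.17466 — 9 statements merged into one kernel-verified Lean document; each statement's English description precedes it below -/
import Mathlib

section
/- Let a, b, c be real numbers with a ≠ 0, let h ∈ ℝ, and let γ be a closed curve at level h of H. Then for all integers i ≥ 4 and j ≥ 0 one has I_{i,j}(γ) = (1/(2a))·( −((i−3)/(j+2))·I_{i−4,j+2}(γ) + (2c(i−3)/(j+4))·I_{i−4,j+4}(γ) − I_{i−2,j}(γ) + ((i−j−3)·b/(j+2))·I_{i−2,j+2}(γ) ). -/
/-- The Hamiltonian H(x,y) = x² − y² + a·x⁴ + c·y⁴ + b·x²·y². -/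
noncomputable def Hfun (a b c x y : ℝ) : ℝ :=
  x ^ 2 - y ^ 2 + a * x ^ 4 + c * y ^ 4 + b * x ^ 2 * y ^ 2

/-- The line integral I_{i,j}(γ) = ∮_γ x^i y^j dx along a parametrized curve of period T. -/
noncomputable def lineInt (x y : ℝ → ℝ) (T : ℝ) (i j : ℕ) : ℝ :=
  ∫ t in (0:ℝ)..T, x t ^ i * y t ^ j * deriv x t

/-! Differentiating `H(x, y) = h` gives `H_x ẋ + H_y ẏ = 0`. Multiplying by `x^(i-3) y^j` and
subtracting the time derivative of a polynomial `Φ(x, y)` with `Φ_y = x^(i-3) y^j H_y` leaves a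
multiple of `ẋ` whose integral over a period vanishes; expanding it gives a linear relation
among the `I_{p,q}`, which is the recurrence. -/

open intervalIntegral

theorem HasDerivAt.hfun_comp (a b c : ℝ) {x y : ℝ → ℝ} {x' y' t : ℝ}
    (hx : HasDerivAt x x' t) (hy : HasDerivAt y y' t) :
    HasDerivAt (fun s => Hfun a b c (x s) (y s))
      ((2 * x t + 4 * a * x t ^ 3 + 2 * b * x t * y t ^ 2) * x'
        + (-2 * y t + 4 * c * y t ^ 3 + 2 * b * x t ^ 2 * y t) * y') t := by
  have := ((((hx.pow 2).sub (hy.pow 2)).add ((hx.pow 4).const_mul a)).add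
    ((hy.pow 4).const_mul c)).add (((hx.pow 2).const_mul b).mul (hy.pow 2))
  refine this.congr_deriv ?_
  simp only [Nat.cast_ofNat, Nat.add_one_sub_one, pow_one, Pi.pow_apply, neg_mul]
  ring

section LevelCurve

variable {a b c h : ℝ} {x y : ℝ → ℝ}

theorem hfun_gradient_dot_deriv_eq_zero (hx : Differentiable ℝ x) (hy : Differentiable ℝ y)
    (hlev : ∀ t, Hfun a b c (x t) (y t) = h) (t : ℝ) :
    (2 * x t + 4 * a * x t ^ 3 + 2 * b * x t * y t ^ 2) * deriv x t
      + (-2 * y t + 4 * c * y t ^ 3 + 2 * b * x t ^ 2 * y t) * deriv y t = 0 :=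
  ((hx t).hasDerivAt.hfun_comp a b c (hy t).hasDerivAt).unique <|
    (funext hlev : (fun s => Hfun a b c (x s) (y s)) = fun _ => h) ▸ hasDerivAt_const t h

/-- The primitive `Φ` of the proof idea, scaled by `(j + 2) (j + 4)` to avoid denominators:
`∂/∂v` of it is `(j + 2) (j + 4) u^(m+1) v^j ∂H/∂v (u, v)`. -/
def levelPrimitive (b c : ℝ) (m j : ℕ) (u v : ℝ) : ℝ :=
  u ^ (m + 1) * (-2 * ((j : ℝ) + 4) * v ^ (j + 2) + 4 * c * ((j : ℝ) + 2) * v ^ (j + 4))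
    + 2 * b * ((j : ℝ) + 4) * u ^ (m + 3) * v ^ (j + 2)

theorem hasDerivAt_levelPrimitive_comp (hx : Differentiable ℝ x) (hy : Differentiable ℝ y)
    (hlev : ∀ t, Hfun a b c (x t) (y t) = h) (m j : ℕ) (t : ℝ) :
    HasDerivAt (fun s => levelPrimitive b c m j (x s) (y s))
      (((m : ℝ) + 1) * (-2 * ((j : ℝ) + 4)) * (x t ^ m * y t ^ (j + 2) * deriv x t)
        + ((m : ℝ) + 1) * (4 * c * ((j : ℝ) + 2)) * (x t ^ m * y t ^ (j + 4) * deriv x t)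
        + 2 * b * ((j : ℝ) + 4) * ((m : ℝ) + 3) * (x t ^ (m + 2) * y t ^ (j + 2) * deriv x t)
        - ((j : ℝ) + 2) * ((j : ℝ) + 4) * 2 * (x t ^ (m + 2) * y t ^ j * deriv x t)
        - ((j : ℝ) + 2) * ((j : ℝ) + 4) * (4 * a) * (x t ^ (m + 4) * y t ^ j * deriv x t)
        - ((j : ℝ) + 2) * ((j : ℝ) + 4) * (2 * b)
          * (x t ^ (m + 2) * y t ^ (j + 2) * deriv x t)) t := by
  have hX := (hx t).hasDerivAt
  have hY := (hy t).hasDerivAt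
  have := ((hX.pow (m + 1)).mul (((hY.pow (j + 2)).const_mul (-2 * ((j : ℝ) + 4))).add
    ((hY.pow (j + 4)).const_mul (4 * c * ((j : ℝ) + 2))))).add
    (((hX.pow (m + 3)).const_mul (2 * b * ((j : ℝ) + 4))).mul (hY.pow (j + 2)))
  refine this.congr_deriv ?_
  simp only [Nat.cast_add, Nat.cast_one, add_tsub_cancel_right, neg_mul, Pi.pow_apply,
    Pi.add_apply, Nat.cast_ofNat, Nat.add_one_sub_one, mul_neg]
  linear_combination (((j : ℝ) + 2) * ((j : ℝ) + 4) * x t ^ (m + 1) * y t ^ j) *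
    hfun_gradient_dot_deriv_eq_zero hx hy hlev t

theorem lineInt_linear_relation {T : ℝ} (hx : ContDiff ℝ 1 x) (hy : ContDiff ℝ 1 y)
    (hxT : x T = x 0) (hyT : y T = y 0) (hlev : ∀ t, Hfun a b c (x t) (y t) = h) (m j : ℕ) :
    ((j : ℝ) + 2) * ((j : ℝ) + 4) * (2 * lineInt x y T (m + 2) j
        + 4 * a * lineInt x y T (m + 4) j + 2 * b * lineInt x y T (m + 2) (j + 2))
      = ((m : ℝ) + 1) * (-2 * ((j : ℝ) + 4) * lineInt x y T m (j + 2)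
          + 4 * c * ((j : ℝ) + 2) * lineInt x y T m (j + 4))
        + 2 * b * ((m : ℝ) + 3) * ((j : ℝ) + 4) * lineInt x y T (m + 2) (j + 2) := by
  have hftc := integral_eq_sub_of_hasDerivAt
    (fun t _ => hasDerivAt_levelPrimitive_comp (hx.differentiable one_ne_zero)
      (hy.differentiable one_ne_zero) hlev m j t)
    (Continuous.intervalIntegrable (by fun_prop) 0 T)
  rw [hxT, hyT, sub_self] at hftc
  simp (disch := exact Continuous.intervalIntegrable (by fun_prop) _ _) only
    [integral_add, integral_sub, integral_const_mul] at hftc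
  unfold lineInt
  linear_combination -hftc

end LevelCurve

theorem stmt1_general (a b c : ℝ) (ha : a ≠ 0) (h : ℝ)
    (x y : ℝ → ℝ) (T : ℝ)
    (hx : ContDiff ℝ 1 x) (hy : ContDiff ℝ 1 y)
    (hper : ∀ t : ℝ, x (t + T) = x t ∧ y (t + T) = y t)
    (hlev : ∀ t : ℝ, Hfun a b c (x t) (y t) = h) :
    ∀ i j : ℕ, 4 ≤ i →
      lineInt x y T i j =
        (1 / (2 * a)) * (-(((i : ℝ) - 3) / ((j : ℝ) + 2)) * lineInt x y T (i - 4) (j + 2)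
          + (2 * c * ((i : ℝ) - 3) / ((j : ℝ) + 4)) * lineInt x y T (i - 4) (j + 4)
          - lineInt x y T (i - 2) j
          + (((i : ℝ) - (j : ℝ) - 3) * b / ((j : ℝ) + 2)) * lineInt x y T (i - 2) (j + 2)) := by
  intro i j hi
  obtain ⟨m, rfl⟩ := Nat.exists_eq_add_of_le' hi
  obtain ⟨hxT, hyT⟩ := zero_add T ▸ hper 0
  have hrel := lineInt_linear_relation hx hy hxT hyT hlev m j
  rw [Nat.add_sub_cancel, show m + 4 - 2 = m + 2 by omega]
  push_cast
  field_simp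
  linear_combination hrel / 2

theorem stmt1 (a b c : ℝ) (ha : a ≠ 0) (h : ℝ)
    (x y : ℝ → ℝ) (T : ℝ) (hT : 0 < T)
    (hx : ContDiff ℝ 1 x) (hy : ContDiff ℝ 1 y)
    (hper : ∀ t : ℝ, x (t + T) = x t ∧ y (t + T) = y t)
    (hlev : ∀ t : ℝ, Hfun a b c (x t) (y t) = h) :
    ∀ i j : ℕ, 4 ≤ i →
      lineInt x y T i j =
        (1 / (2 * a)) * (-(((i : ℝ) - 3) / ((j : ℝ) + 2)) * lineInt x y T (i - 4) (j + 2)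
          + (2 * c * ((i : ℝ) - 3) / ((j : ℝ) + 4)) * lineInt x y T (i - 4) (j + 4)
          - lineInt x y T (i - 2) j
          + (((i : ℝ) - (j : ℝ) - 3) * b / ((j : ℝ) + 2)) * lineInt x y T (i - 2) (j + 2)) :=
  stmt1_general a b c ha h x y T hx hy hper hlev
end

section
/- Let a, b, c be real numbers with c ≠ 0, let h ∈ ℝ, and let γ be a closed curve at level h of H. Then for all integers i ≥ 0 and j ≥ 4 one has I_{i,j}(γ) = (j/(2c(i+j+1)))·( 2h·I_{i,j−4}(γ) − I_{i+2,j−4}(γ) + ((i+2j−3)/(j−2))·I_{i,j−2}(γ) − ((i+j+1)·b/(j−2))·I_{i+2,j−2}(γ) ). -/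
theorem hasDerivAt_Hfun_comp {a b c x' y' t : ℝ} {x y : ℝ → ℝ}
    (hx : HasDerivAt x x' t) (hy : HasDerivAt y y' t) :
    HasDerivAt (fun s => Hfun a b c (x s) (y s))
      ((2 * x t + 4 * a * x t ^ 3 + 2 * b * x t * y t ^ 2) * x'
        + (-2 * y t + 4 * c * y t ^ 3 + 2 * b * x t ^ 2 * y t) * y') t := by
  refine HasDerivAt.congr_deriv ((((((hx.pow 2).sub (hy.pow 2)).add ((hx.pow 4).const_mul a)).add
    ((hy.pow 4).const_mul c)).add (((hx.pow 2).const_mul b).mul (hy.pow 2)))) ?_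
  push_cast [Pi.pow_apply]
  ring

noncomputable def lineIntDy (x y : ℝ → ℝ) (T : ℝ) (i j : ℕ) : ℝ :=
  ∫ t in (0:ℝ)..T, x t ^ i * y t ^ j * deriv y t

section ClosedCurve

variable {x y : ℝ → ℝ} {T : ℝ}

theorem lineInt_add_lineIntDy_eq_zero (hx : ContDiff ℝ 1 x) (hy : ContDiff ℝ 1 y)
    (hxT : x T = x 0) (hyT : y T = y 0) (m n : ℕ) :
    (m + 1 : ℝ) * lineInt x y T m (n + 1) + (n + 1 : ℝ) * lineIntDy x y T (m + 1) n = 0 := by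
  have hxc := hx.continuous
  have hyc := hy.continuous
  have hderiv (t : ℝ) : HasDerivAt (fun s => x s ^ (m + 1) * y s ^ (n + 1))
      ((m + 1 : ℝ) * (x t ^ m * y t ^ (n + 1) * deriv x t)
        + (n + 1 : ℝ) * (x t ^ (m + 1) * y t ^ n * deriv y t)) t := by
    refine HasDerivAt.congr_deriv (((hx.differentiable one_ne_zero t).hasDerivAt.pow (m + 1)).mul
      ((hy.differentiable one_ne_zero t).hasDerivAt.pow (n + 1))) ?_
    push_cast [Pi.pow_apply]
    ring
  simp (disch := exact Continuous.intervalIntegrable (by fun_prop) _ _) only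
    [lineInt, lineIntDy, ← intervalIntegral.integral_const_mul,
      ← intervalIntegral.integral_add]
  rw [intervalIntegral.integral_eq_sub_of_hasDerivAt (fun t _ => hderiv t)
    (Continuous.intervalIntegrable (by fun_prop) _ _), hxT, hyT, sub_self]

theorem Hfun_comp_deriv_eq_zero {a b c h : ℝ} (hx : Differentiable ℝ x) (hy : Differentiable ℝ y)
    (hlev : ∀ t, Hfun a b c (x t) (y t) = h) (t : ℝ) :
    (2 * x t + 4 * a * x t ^ 3 + 2 * b * x t * y t ^ 2) * deriv x t
      + (-2 * y t + 4 * c * y t ^ 3 + 2 * b * x t ^ 2 * y t) * deriv y t = 0 := by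
  have hH := hasDerivAt_Hfun_comp (a := a) (b := b) (c := c) (hx t).hasDerivAt (hy t).hasDerivAt
  rw [show (fun s => Hfun a b c (x s) (y s)) = fun _ => h from funext hlev] at hH
  exact hH.unique (hasDerivAt_const t h)

theorem lineInt_level {a b c h : ℝ} (hx : Continuous x) (hy : Continuous y)
    (hx' : Continuous (deriv x)) (hlev : ∀ t, Hfun a b c (x t) (y t) = h) (i k : ℕ) :
    lineInt x y T (i + 2) k - lineInt x y T i (k + 2) + a * lineInt x y T (i + 4) k
      + c * lineInt x y T i (k + 4) + b * lineInt x y T (i + 2) (k + 2) = h * lineInt x y T i k := by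
  simp (disch := exact Continuous.intervalIntegrable (by fun_prop) _ _) only [lineInt,
    ← intervalIntegral.integral_const_mul, ← intervalIntegral.integral_add,
    ← intervalIntegral.integral_sub]
  refine intervalIntegral.integral_congr fun t _ => ?_
  have hlev_t := hlev t
  unfold Hfun at hlev_t
  linear_combination (x t ^ i * y t ^ k * deriv x t) * hlev_t

theorem lineInt_energy {a b c h : ℝ} (hx : ContDiff ℝ 1 x) (hy : ContDiff ℝ 1 y)
    (hlev : ∀ t, Hfun a b c (x t) (y t) = h) (i k : ℕ) :
    2 * lineInt x y T (i + 2) k + 4 * a * lineInt x y T (i + 4) k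
      + 2 * b * lineInt x y T (i + 2) (k + 2) - 2 * lineIntDy x y T (i + 1) (k + 1)
      + 4 * c * lineIntDy x y T (i + 1) (k + 3) + 2 * b * lineIntDy x y T (i + 3) (k + 1) = 0 := by
  have hxc := hx.continuous
  have hyc := hy.continuous
  simp (disch := exact Continuous.intervalIntegrable (by fun_prop) _ _) only [lineInt, lineIntDy,
    ← intervalIntegral.integral_const_mul, ← intervalIntegral.integral_add,
    ← intervalIntegral.integral_sub]
  refine (intervalIntegral.integral_congr fun t _ => ?_).trans intervalIntegral.integral_zero
  linear_combination (x t ^ (i + 1) * y t ^ k) *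
    Hfun_comp_deriv_eq_zero (hx.differentiable one_ne_zero) (hy.differentiable one_ne_zero) hlev t

theorem lineInt_recursion {a b c h : ℝ} (hx : ContDiff ℝ 1 x) (hy : ContDiff ℝ 1 y)
    (hxT : x T = x 0) (hyT : y T = y 0) (hlev : ∀ t, Hfun a b c (x t) (y t) = h) (i k : ℕ) :
    2 * c * (i + k + 5) * (k + 2) * lineInt x y T i (k + 4)
      = 2 * h * (k + 2) * (k + 4) * lineInt x y T i k - (k + 2) * (k + 4) * lineInt x y T (i + 2) k
        + (k + 4) * (i + 2 * k + 5) * lineInt x y T i (k + 2)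
        - b * (k + 4) * (i + k + 5) * lineInt x y T (i + 2) (k + 2) := by
  have e1 := lineInt_add_lineIntDy_eq_zero hx hy hxT hyT i (k + 1)
  have e2 := lineInt_add_lineIntDy_eq_zero hx hy hxT hyT i (k + 3)
  have e3 := lineInt_add_lineIntDy_eq_zero hx hy hxT hyT (i + 2) (k + 1)
  simp only [add_assoc, Nat.reduceAdd] at e1 e2 e3
  push_cast at e1 e2 e3
  linear_combination 2 * ((k : ℝ) + 2) * (k + 4) *
      lineInt_level (T := T) hx.continuous hy.continuous (hx.continuous_deriv le_rfl) hlev i k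
    - ((k : ℝ) + 2) * (k + 4) / 2 * lineInt_energy (T := T) hx hy hlev i k
    - ((k : ℝ) + 4) * e1 + 2 * c * ((k : ℝ) + 2) * e2 + b * ((k : ℝ) + 4) * e3

end ClosedCurve

theorem stmt2_general (a b c : ℝ) (hc : c ≠ 0) (h : ℝ)
    (x y : ℝ → ℝ) (T : ℝ)
    (hx : ContDiff ℝ 1 x) (hy : ContDiff ℝ 1 y)
    (hper : ∀ t : ℝ, x (t + T) = x t ∧ y (t + T) = y t)
    (hlev : ∀ t : ℝ, Hfun a b c (x t) (y t) = h) :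
    ∀ i j : ℕ, 4 ≤ j →
      lineInt x y T i j =
        ((j : ℝ) / (2 * c * ((i : ℝ) + (j : ℝ) + 1))) *
          (2 * h * lineInt x y T i (j - 4) - lineInt x y T (i + 2) (j - 4)
            + (((i : ℝ) + 2 * (j : ℝ) - 3) / ((j : ℝ) - 2)) * lineInt x y T i (j - 2)
            - (((i : ℝ) + (j : ℝ) + 1) * b / ((j : ℝ) - 2)) * lineInt x y T (i + 2) (j - 2)) := by
  intro i j hj
  obtain ⟨k, rfl⟩ : ∃ k, j = k + 4 := ⟨j - 4, by omega⟩
  obtain ⟨hxT, hyT⟩ := zero_add T ▸ hper 0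
  have hrec := lineInt_recursion hx hy hxT hyT hlev i k
  rw [Nat.add_sub_cancel, show k + 4 - 2 = k + 2 by omega]
  push_cast
  rw [show (k : ℝ) + 4 - 2 = k + 2 by ring]
  field_simp
  linear_combination hrec

theorem stmt2 (a b c : ℝ) (hc : c ≠ 0) (h : ℝ)
    (x y : ℝ → ℝ) (T : ℝ) (hT : 0 < T)
    (hx : ContDiff ℝ 1 x) (hy : ContDiff ℝ 1 y)
    (hper : ∀ t : ℝ, x (t + T) = x t ∧ y (t + T) = y t)
    (hlev : ∀ t : ℝ, Hfun a b c (x t) (y t) = h) :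
    ∀ i j : ℕ, 4 ≤ j →
      lineInt x y T i j =
        ((j : ℝ) / (2 * c * ((i : ℝ) + (j : ℝ) + 1))) *
          (2 * h * lineInt x y T i (j - 4) - lineInt x y T (i + 2) (j - 4)
            + (((i : ℝ) + 2 * (j : ℝ) - 3) / ((j : ℝ) - 2)) * lineInt x y T i (j - 2)
            - (((i : ℝ) + (j : ℝ) + 1) * b / ((j : ℝ) - 2)) * lineInt x y T (i + 2) (j - 2)) :=
  stmt2_general a b c hc h x y T hx hy hper hlev
end

section
/- (Lemma 2.1, eq. (2.2)) Let a, b, c be real numbers with a·c·(b²−4ac) ≠ 0, and let p, q ≥ 0 be integers with p + q ≥ 2; set n := (2p+1) + (2q+1). Then there exist real polynomials ḡ₁, ḡ₂ with deg ḡ₁ ≤ ⌊(n−2)/4⌋ and deg ḡ₂ ≤ ⌊n/4⌋ − 1, such that for every h ∈ ℝ and every closed curve γ at level h of H: I_{2p+1,2q+1}(γ) = ḡ₁(h)·I_{1,1}(γ) + ḡ₂(h)·I_{1,3}(γ). -/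
open Function intervalIntegral Polynomial

theorem integral_eq_zero_of_hasDerivAt_of_periodic {f f' : ℝ → ℝ} {T : ℝ}
    (hf : ∀ t, HasDerivAt f (f' t) t) (hf' : Continuous f') (hT : Periodic f T) :
    ∫ t in 0..T, f' t = 0 := by
  rw [integral_eq_sub_of_hasDerivAt (fun t _ => hf t) (hf'.intervalIntegrable _ _),
    show T = 0 + T by ring, hT, sub_self]

section Periodic

variable {u v : ℝ → ℝ} {T : ℝ}

theorem lineInt_right_zero (hv : ContDiff ℝ 1 v) (hpv : Periodic v T) (l : ℕ) :
    lineInt v u T l 0 = 0 := by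
  have := hv.continuous; have := hv.continuous_deriv le_rfl
  have key := integral_eq_zero_of_hasDerivAt_of_periodic (T := T)
    (f := fun t => v t ^ (l + 1)) (f' := fun t => (l + 1) * (v t ^ l * v t ^ 0 * deriv v t))
    (fun t => (((hv.differentiable one_ne_zero) t).hasDerivAt.fun_pow (l + 1)).congr_deriv
      (by push_cast; ring))
    (by fun_prop) (fun t => by simp only [hpv t])
  rw [integral_const_mul, mul_eq_zero] at key
  exact key.resolve_left (by positivity)

-- `lineInt v u T l k` is `∮ uᵏ vˡ dv`: this is integration by parts against `du`.
theorem lineInt_swap (hu : ContDiff ℝ 1 u) (hv : ContDiff ℝ 1 v)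
    (hpu : Periodic u T) (hpv : Periodic v T) (k l : ℕ) :
    (l + 1 : ℝ) * lineInt v u T l (k + 1) = -((k + 1) * lineInt u v T k (l + 1)) := by
  have := hu.continuous; have := hv.continuous
  have := hu.continuous_deriv le_rfl; have := hv.continuous_deriv le_rfl
  have hdu := fun t => ((hu.differentiable one_ne_zero) t).hasDerivAt
  have hdv := fun t => ((hv.differentiable one_ne_zero) t).hasDerivAt
  have key := integral_eq_zero_of_hasDerivAt_of_periodic (T := T)
    (f := fun t => u t ^ (k + 1) * v t ^ (l + 1))
    (f' := fun t => (k + 1) * (u t ^ k * v t ^ (l + 1) * deriv u t)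
      + (l + 1) * (v t ^ l * u t ^ (k + 1) * deriv v t))
    (fun t => (((hdu t).fun_pow (k + 1)).fun_mul ((hdv t).fun_pow (l + 1))).congr_deriv
      (by push_cast; ring))
    (by fun_prop) (fun t => by simp only [hpu t, hpv t])
  simp (disch := apply Continuous.intervalIntegrable; fun_prop) only
    [integral_add, integral_const_mul] at key
  unfold lineInt
  linear_combination key

end Periodic

theorem Polynomial.mul_X_mem_degreeLT {R : Type*} [Semiring R] [Nontrivial R] {g : R[X]}
    {n : ℕ} (hg : g ∈ degreeLT R n) : g * X ∈ degreeLT R (n + 1) := by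
  rw [mem_degreeLT] at *
  rw [degree_mul_X]
  exact_mod_cast WithBot.add_lt_add_right (by simp) hg

structure ClosedCurve (a b c : ℝ) where
  x : ℝ → ℝ
  y : ℝ → ℝ
  T : ℝ
  level : ℝ
  contDiff_x : ContDiff ℝ 1 x
  contDiff_y : ContDiff ℝ 1 y
  periodic_x : Periodic x T
  periodic_y : Periodic y T
  hfun_eq : ∀ t, Hfun a b c (x t) (y t) = level

namespace ClosedCurve

variable {a b c : ℝ} (γ : ClosedCurve a b c)

theorem hasDerivAt_x (t : ℝ) : HasDerivAt γ.x (deriv γ.x t) t :=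
  ((γ.contDiff_x.differentiable one_ne_zero) t).hasDerivAt

theorem hasDerivAt_y (t : ℝ) : HasDerivAt γ.y (deriv γ.y t) t :=
  ((γ.contDiff_y.differentiable one_ne_zero) t).hasDerivAt

theorem lineInt_relation_level (m n : ℕ) :
    lineInt γ.x γ.y γ.T (m + 2) n - lineInt γ.x γ.y γ.T m (n + 2)
      + a * lineInt γ.x γ.y γ.T (m + 4) n + c * lineInt γ.x γ.y γ.T m (n + 4)
      + b * lineInt γ.x γ.y γ.T (m + 2) (n + 2) = γ.level * lineInt γ.x γ.y γ.T m n := by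
  have := γ.contDiff_x.continuous; have := γ.contDiff_y.continuous
  have := γ.contDiff_x.continuous_deriv le_rfl
  have key : ∫ t in 0..γ.T, (γ.x t ^ (m + 2) * γ.y t ^ n * deriv γ.x t
      - γ.x t ^ m * γ.y t ^ (n + 2) * deriv γ.x t
      + a * (γ.x t ^ (m + 4) * γ.y t ^ n * deriv γ.x t)
      + c * (γ.x t ^ m * γ.y t ^ (n + 4) * deriv γ.x t)
      + b * (γ.x t ^ (m + 2) * γ.y t ^ (n + 2) * deriv γ.x t))
      = ∫ t in 0..γ.T, γ.level * (γ.x t ^ m * γ.y t ^ n * deriv γ.x t) :=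
    integral_congr fun t _ => by
      have h := γ.hfun_eq t
      unfold Hfun at h
      linear_combination (γ.x t ^ m * γ.y t ^ n * deriv γ.x t) * h
  simp (disch := apply Continuous.intervalIntegrable; fun_prop) only
    [integral_add, integral_sub, integral_const_mul] at key
  exact key

theorem deriv_hfun_comp_eq_zero (t : ℝ) :
    (2 * γ.x t + 4 * a * γ.x t ^ 3 + 2 * b * γ.x t * γ.y t ^ 2) * deriv γ.x t
      + (-2 * γ.y t + 4 * c * γ.y t ^ 3 + 2 * b * γ.x t ^ 2 * γ.y t) * deriv γ.y t = 0 := by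
  have hx := γ.hasDerivAt_x t
  have hy := γ.hasDerivAt_y t
  have hH : HasDerivAt (fun s => Hfun a b c (γ.x s) (γ.y s))
      ((2 * γ.x t + 4 * a * γ.x t ^ 3 + 2 * b * γ.x t * γ.y t ^ 2) * deriv γ.x t
        + (-2 * γ.y t + 4 * c * γ.y t ^ 3 + 2 * b * γ.x t ^ 2 * γ.y t) * deriv γ.y t) t :=
    (((((hx.fun_pow 2).fun_sub (hy.fun_pow 2)).fun_add ((hx.fun_pow 4).const_mul a)).fun_add
      ((hy.fun_pow 4).const_mul c)).fun_add (((hx.fun_pow 2).const_mul b).fun_mul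
        (hy.fun_pow 2))).congr_deriv (by push_cast; ring)
  rw [funext γ.hfun_eq] at hH
  exact hH.unique (hasDerivAt_const t _)

theorem lineInt_relation_dH (m n : ℕ) :
    2 * lineInt γ.x γ.y γ.T (m + 1) n + 4 * a * lineInt γ.x γ.y γ.T (m + 3) n
      + 2 * b * lineInt γ.x γ.y γ.T (m + 1) (n + 2) - 2 * lineInt γ.y γ.x γ.T (n + 1) m
      + 4 * c * lineInt γ.y γ.x γ.T (n + 3) m
      + 2 * b * lineInt γ.y γ.x γ.T (n + 1) (m + 2) = 0 := by
  have := γ.contDiff_x.continuous; have := γ.contDiff_y.continuous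
  have := γ.contDiff_x.continuous_deriv le_rfl; have := γ.contDiff_y.continuous_deriv le_rfl
  have key : ∫ t in 0..γ.T, (2 * (γ.x t ^ (m + 1) * γ.y t ^ n * deriv γ.x t)
      + 4 * a * (γ.x t ^ (m + 3) * γ.y t ^ n * deriv γ.x t)
      + 2 * b * (γ.x t ^ (m + 1) * γ.y t ^ (n + 2) * deriv γ.x t)
      - 2 * (γ.y t ^ (n + 1) * γ.x t ^ m * deriv γ.y t)
      + 4 * c * (γ.y t ^ (n + 3) * γ.x t ^ m * deriv γ.y t)
      + 2 * b * (γ.y t ^ (n + 1) * γ.x t ^ (m + 2) * deriv γ.y t)) = ∫ _ in 0..γ.T, 0 :=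
    integral_congr fun t _ => by
      linear_combination (γ.x t ^ m * γ.y t ^ n) * γ.deriv_hfun_comp_eq_zero t
  simp (disch := apply Continuous.intervalIntegrable; fun_prop) only
    [integral_add, integral_sub, integral_const_mul, integral_zero] at key
  exact key

noncomputable def oddInt (i j : ℕ) (γ : ClosedCurve a b c) : ℝ :=
  lineInt γ.x γ.y γ.T (2 * i + 1) (2 * j + 1)

theorem oddInt_relation_level (i j : ℕ) :
    γ.oddInt (i + 1) j - γ.oddInt i (j + 1) + a * γ.oddInt (i + 2) j + c * γ.oddInt i (j + 2)
      + b * γ.oddInt (i + 1) (j + 1) = γ.level * γ.oddInt i j := by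
  have h := γ.lineInt_relation_level (2 * i + 1) (2 * j + 1)
  unfold oddInt
  ring_nf at h ⊢
  exact h

theorem oddInt_relation_dH_zero (j : ℕ) :
    2 * (2 * j + 3) * γ.oddInt 0 j + 4 * a * (2 * j + 3) * γ.oddInt 1 j
      + 2 * b * (2 * j + 1) * γ.oddInt 0 (j + 1) = 0 := by
  have hdH := γ.lineInt_relation_dH 0 (2 * j + 1)
  have hy1 := lineInt_right_zero (u := γ.x) γ.contDiff_y γ.periodic_y (2 * j + 2)
  have hy2 := lineInt_right_zero (u := γ.x) γ.contDiff_y γ.periodic_y (2 * j + 4)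
  have hs := lineInt_swap γ.contDiff_x γ.contDiff_y γ.periodic_x γ.periodic_y 1 (2 * j + 2)
  unfold oddInt
  push_cast at hs
  ring_nf at hdH hy1 hy2 hs ⊢
  linear_combination (2 * (j : ℝ) + 3) * hdH + 2 * (2 * (j : ℝ) + 3) * hy1
    - 4 * c * (2 * (j : ℝ) + 3) * hy2 - 2 * b * hs

theorem oddInt_relation_dH_succ (i j : ℕ) :
    2 * (2 * j + 3) * (2 * j + 5) * γ.oddInt (i + 1) j
      + 4 * a * (2 * j + 3) * (2 * j + 5) * γ.oddInt (i + 2) j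
      + 2 * b * (2 * j - 2 * i - 1) * (2 * j + 5) * γ.oddInt (i + 1) (j + 1)
      + 4 * (i + 1) * (2 * j + 5) * γ.oddInt i (j + 1)
      - 8 * c * (i + 1) * (2 * j + 3) * γ.oddInt i (j + 2) = 0 := by
  have hdH := γ.lineInt_relation_dH (2 * i + 2) (2 * j + 1)
  have hs := lineInt_swap γ.contDiff_x γ.contDiff_y γ.periodic_x γ.periodic_y
  have hs1 := hs (2 * i + 1) (2 * j + 2)
  have hs2 := hs (2 * i + 1) (2 * j + 4)
  have hs3 := hs (2 * i + 3) (2 * j + 2)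
  unfold oddInt
  push_cast at hs1 hs2 hs3
  ring_nf at hdH hs1 hs2 hs3 ⊢
  linear_combination (2 * (j : ℝ) + 3) * (2 * j + 5) * hdH + 2 * (2 * (j : ℝ) + 5) * hs1
    - 4 * c * (2 * (j : ℝ) + 3) * hs2 - 2 * b * (2 * (j : ℝ) + 5) * hs3

variable (a b c) in
-- `g₁(h) K₀₀ + g₂(h) K₀₁` with `2 deg g₁ ≤ L` and `2 deg g₂ + 1 ≤ L`, i.e. of weight `≤ L`.
noncomputable def weightLE (L : ℕ) : Submodule ℝ (ClosedCurve a b c → ℝ) where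
  carrier := {f | ∃ g₁ ∈ degreeLT ℝ ((L + 2) / 2), ∃ g₂ ∈ degreeLT ℝ ((L + 1) / 2),
    ∀ γ, f γ = g₁.eval γ.level * oddInt 0 0 γ + g₂.eval γ.level * oddInt 0 1 γ}
  add_mem' := by
    rintro f f' ⟨g₁, hg₁, g₂, hg₂, hf⟩ ⟨g₁', hg₁', g₂', hg₂', hf'⟩
    refine ⟨g₁ + g₁', add_mem hg₁ hg₁', g₂ + g₂', add_mem hg₂ hg₂', fun γ => ?_⟩
    simp only [Pi.add_apply, hf, hf', eval_add]
    ring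
  zero_mem' := ⟨0, zero_mem _, 0, zero_mem _, fun γ => by simp⟩
  smul_mem' := by
    rintro r f ⟨g₁, hg₁, g₂, hg₂, hf⟩
    refine ⟨r • g₁, Submodule.smul_mem _ r hg₁, r • g₂, Submodule.smul_mem _ r hg₂, fun γ => ?_⟩
    simp only [Pi.smul_apply, smul_eq_mul, hf, eval_smul]
    ring

theorem weightLE_mono : Monotone (weightLE a b c) := by
  rintro L L' hL f ⟨g₁, hg₁, g₂, hg₂, hf⟩
  exact ⟨g₁, degreeLT_mono (by omega) hg₁, g₂, degreeLT_mono (by omega) hg₂, hf⟩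

theorem level_mul_mem_weightLE {L : ℕ} {f : ClosedCurve a b c → ℝ} (hf : f ∈ weightLE a b c L) :
    (fun γ => γ.level * f γ) ∈ weightLE a b c (L + 2) := by
  obtain ⟨g₁, hg₁, g₂, hg₂, hf⟩ := hf
  refine ⟨g₁ * X, ?_, g₂ * X, ?_, fun γ => ?_⟩
  · simpa [show (L + 2 + 2) / 2 = (L + 2) / 2 + 1 by omega] using mul_X_mem_degreeLT hg₁
  · simpa [show (L + 2 + 1) / 2 = (L + 1) / 2 + 1 by omega] using mul_X_mem_degreeLT hg₂
  · simp only [hf, eval_mul, eval_X]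
    ring

theorem oddInt_zero_zero_mem : oddInt 0 0 ∈ weightLE a b c 0 :=
  ⟨1, by simp [mem_degreeLT], 0, zero_mem _, fun γ => by simp⟩

theorem oddInt_zero_one_mem : oddInt 0 1 ∈ weightLE a b c 1 :=
  ⟨0, zero_mem _, 1, by simp [mem_degreeLT], fun γ => by simp⟩

theorem oddInt_mem_weightLE_of_zero {L : ℕ} (ha : a ≠ 0)
    (hprev : ∀ i j, i + j < L → oddInt i j ∈ weightLE a b c L)
    (h0 : oddInt 0 L ∈ weightLE a b c L) :
    ∀ i j, i + j = L → oddInt i j ∈ weightLE a b c L := by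
  intro i
  induction i using Nat.strong_induction_on with
  | _ i ih =>
  intro j hij
  match i, ih with
  | 0, _ => simpa [← hij] using h0
  | 1, ih =>
    have hs : 4 * a * (2 * j + 3 : ℝ) ≠ 0 := mul_ne_zero (by simpa using ha) (by positivity)
    rw [← Submodule.smul_mem_iff _ hs]
    convert add_mem (Submodule.smul_mem _ (-2 * (2 * j + 3) : ℝ) (hprev 0 j (by omega)))
      (Submodule.smul_mem _ (-2 * b * (2 * j + 1)) (ih 0 (by omega) (j + 1) (by omega))) using 1
    funext γ
    simp only [Pi.add_apply, Pi.smul_apply, smul_eq_mul]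
    linear_combination γ.oddInt_relation_dH_zero j
  | k + 2, ih =>
    have hs : 4 * a * (2 * j + 3) * (2 * j + 5 : ℝ) ≠ 0 :=
      mul_ne_zero (mul_ne_zero (by simpa using ha) (by positivity)) (by positivity)
    rw [← Submodule.smul_mem_iff _ hs]
    convert add_mem (add_mem (add_mem
      (Submodule.smul_mem _ (-2 * (2 * j + 3) * (2 * j + 5) : ℝ) (hprev (k + 1) j (by omega)))
      (Submodule.smul_mem _ (-2 * b * (2 * j - 2 * k - 1) * (2 * j + 5))
        (ih (k + 1) (by omega) (j + 1) (by omega))))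
      (Submodule.smul_mem _ (-4 * (k + 1) * (2 * j + 5) : ℝ) (hprev k (j + 1) (by omega))))
      (Submodule.smul_mem _ (8 * c * (k + 1) * (2 * j + 3)) (ih k (by omega) (j + 2) (by omega)))
      using 1
    funext γ
    simp only [Pi.add_apply, Pi.smul_apply, smul_eq_mul]
    linear_combination γ.oddInt_relation_dH_succ k j

theorem oddInt_zero_mem_weightLE {L : ℕ} (hD : b ^ 2 - 4 * a * c ≠ 0)
    (hprev : ∀ i j, i + j < L → oddInt i j ∈ weightLE a b c (i + j)) :
    oddInt 0 L ∈ weightLE a b c L := by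
  match L, hprev with
  | 0, _ => exact oddInt_zero_zero_mem
  | 1, _ => exact oddInt_zero_one_mem
  | s + 2, hprev =>
    have hs : 2 * (2 * s + 3) * (2 * s + 7) * (4 * a * c - b ^ 2 : ℝ) ≠ 0 :=
      mul_ne_zero (by positivity) fun h => hD (by linarith)
    have h0s : oddInt 0 s ∈ weightLE a b c s := by simpa using hprev 0 s (by omega)
    rw [← Submodule.smul_mem_iff _ hs]
    convert add_mem (add_mem
      (Submodule.smul_mem _ (2 * (2 * s + 5) * (8 * a * (s + 2) + b * (2 * s + 7)))
        (weightLE_mono (by omega) (hprev 0 (s + 1) (by omega))))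
      (Submodule.smul_mem _ (-4 * a * (2 * s + 3) * (2 * s + 5))
        (weightLE_mono (by omega) (hprev 1 s (by omega)))))
      (Submodule.smul_mem _ (8 * a * (2 * s + 3) * (2 * s + 5)) (level_mul_mem_weightLE h0s))
      using 1
    funext γ
    have h₁ := γ.oddInt_relation_dH_zero (s + 1)
    have h₂ := γ.oddInt_relation_dH_succ 0 s
    have h₃ := γ.oddInt_relation_level 0 s
    simp only [Pi.add_apply, Pi.smul_apply, smul_eq_mul]
    push_cast at h₁ h₂ h₃ ⊢
    linear_combination -(b * (2 * s + 7)) * h₁ - 2 * a * h₂ + 8 * a * (2 * s + 3) * (2 * s + 5) * h₃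

theorem oddInt_mem_weightLE (ha : a ≠ 0) (hD : b ^ 2 - 4 * a * c ≠ 0) (i j : ℕ) :
    oddInt i j ∈ weightLE a b c (i + j) := by
  induction hL : i + j using Nat.strong_induction_on generalizing i j with
  | _ L ih =>
    have hprev : ∀ i j, i + j < L → oddInt i j ∈ weightLE a b c (i + j) :=
      fun i j h => ih _ h i j rfl
    exact oddInt_mem_weightLE_of_zero ha (fun i j h => weightLE_mono h.le (hprev i j h))
      (oddInt_zero_mem_weightLE hD hprev) i j hL

end ClosedCurve

theorem stmt5_general (a b c : ℝ) (habc : a * c * (b ^ 2 - 4 * a * c) ≠ 0)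
    (p q : ℕ) :
    ∃ g1 g2 : Polynomial ℝ,
      g1.degree ≤ ((((2 * p + 1) + (2 * q + 1) - 2) / 4 : ℕ) : WithBot ℕ) ∧
      g2.degree < ((((2 * p + 1) + (2 * q + 1)) / 4 : ℕ) : WithBot ℕ) ∧
      ∀ (h : ℝ) (x y : ℝ → ℝ) (T : ℝ), 0 < T →
        ContDiff ℝ 1 x → ContDiff ℝ 1 y →
        (∀ t : ℝ, x (t + T) = x t ∧ y (t + T) = y t) →
        (∀ t : ℝ, Hfun a b c (x t) (y t) = h) →
        lineInt x y T (2 * p + 1) (2 * q + 1) =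
          g1.eval h * lineInt x y T 1 1 + g2.eval h * lineInt x y T 1 3 := by
  have ha : a ≠ 0 := left_ne_zero_of_mul (left_ne_zero_of_mul habc)
  have hD : b ^ 2 - 4 * a * c ≠ 0 := right_ne_zero_of_mul habc
  obtain ⟨g₁, hg₁, g₂, hg₂, hg⟩ := ClosedCurve.oddInt_mem_weightLE ha hD p q
  refine ⟨g₁, g₂, ?_, ?_, fun h x y T _ hx hy hper hlev => ?_⟩
  · rwa [show (p + q + 2) / 2 = (2 * p + 1 + (2 * q + 1) - 2) / 4 + 1 by omega,
      degreeLT_succ_eq_degreeLE, mem_degreeLE] at hg₁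
  · rwa [show (2 * p + 1 + (2 * q + 1)) / 4 = (p + q + 1) / 2 by omega, ← mem_degreeLT]
  · exact hg ⟨x, y, T, h, hx, hy, fun t => (hper t).1, fun t => (hper t).2, hlev⟩

theorem stmt5 (a b c : ℝ) (habc : a * c * (b ^ 2 - 4 * a * c) ≠ 0)
    (p q : ℕ) (hpq : 2 ≤ p + q) :
    ∃ g1 g2 : Polynomial ℝ,
      g1.degree ≤ ((((2 * p + 1) + (2 * q + 1) - 2) / 4 : ℕ) : WithBot ℕ) ∧
      g2.degree < ((((2 * p + 1) + (2 * q + 1)) / 4 : ℕ) : WithBot ℕ) ∧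
      ∀ (h : ℝ) (x y : ℝ → ℝ) (T : ℝ), 0 < T →
        ContDiff ℝ 1 x → ContDiff ℝ 1 y →
        (∀ t : ℝ, x (t + T) = x t ∧ y (t + T) = y t) →
        (∀ t : ℝ, Hfun a b c (x t) (y t) = h) →
        lineInt x y T (2 * p + 1) (2 * q + 1) =
          g1.eval h * lineInt x y T 1 1 + g2.eval h * lineInt x y T 1 3 :=
  stmt5_general a b c habc p q
end

section
/- (Lemma 2.2) Let a, b, c be real numbers with a·c·(b²−4ac) ≠ 0, let n ≥ 1, and let f(x,y), g(x,y) be real polynomials of (total) degree at most n. Then there exist real polynomials f₁, f₂, f₃, f₄, f₅, g₁, g₂, l₁, l₂ with deg f₁ ≤ ⌊(n−1)/4⌋, deg f₂, deg f₃, deg f₅ ≤ ⌊(n−3)/4⌋, deg f₄ ≤ ⌊(n−1)/4⌋ − 1, deg g₁, deg l₁ ≤ ⌊(n−2)/4⌋, and deg g₂, deg l₂ ≤ ⌊n/4⌋ − 1, such that for every h ∈ ℝ and every closed curve γ at level h of H: ∫₀ᵀ [ g(x(t),y(t))·x'(t) − f(x(t),y(t))·y'(t) ] dt = f₁(h)I_{0,1}(γ)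 + f₂(h)I_{0,3}(γ) + f₃(h)I_{2,1}(γ) + f₄(h)I_{2,3}(γ) + f₅(h)I_{1,2}(γ) + g₁(h)I_{1,1}(γ) + g₂(h)I_{1,3}(γ) + l₁(h)I_{0,2}(γ) + l₂(h)I_{2,2}(γ). -/
structure IsClosedC1Curve (x y : ℝ → ℝ) (T : ℝ) : Prop where
  contDiff_x : ContDiff ℝ 1 x
  contDiff_y : ContDiff ℝ 1 y
  x_closed : x T = x 0
  y_closed : y T = y 0

def termSum (l : List (ℝ × ℕ × ℕ)) (u v : ℝ) : ℝ :=
  (l.map fun e => e.1 * u ^ e.2.1 * v ^ e.2.2).sum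

theorem hasDerivAt_Hfun (a b c : ℝ) {f g : ℝ → ℝ} {f' g' t : ℝ} (hf : HasDerivAt f f' t)
    (hg : HasDerivAt g g' t) :
    HasDerivAt (fun s => Hfun a b c (f s) (g s))
      ((2 * f t + 4 * a * f t ^ 3 + 2 * b * f t * g t ^ 2) * f'
        + (-(2 * g t) + 4 * c * g t ^ 3 + 2 * b * f t ^ 2 * g t) * g') t := by
  unfold Hfun
  refine (((((hf.fun_pow 2).fun_sub (hg.fun_pow 2)).fun_add ((hf.fun_pow 4).const_mul a)).fun_add
    ((hg.fun_pow 4).const_mul c)).fun_add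
      (((hf.fun_pow 2).const_mul b).fun_mul (hg.fun_pow 2))).congr_deriv ?_
  push_cast
  ring

section Curve

variable {x y : ℝ → ℝ} {T : ℝ}

theorem integral_termSum_mul_deriv {w : ℝ → ℝ} (hx : Continuous x) (hy : Continuous y)
    (hw : Continuous (deriv w)) (l : List (ℝ × ℕ × ℕ)) :
    ∫ t in (0:ℝ)..T, termSum l (x t) (y t) * deriv w t =
      (l.map fun e => e.1 * ∫ t in (0:ℝ)..T, x t ^ e.2.1 * y t ^ e.2.2 * deriv w t).sum := by
  induction l with
  | nil => simp [termSum]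
  | cons e l ih =>
    have hl : Continuous fun t => termSum l (x t) (y t) :=
      continuous_list_sum l fun e _ => by fun_prop
    have hsplit : (fun t => termSum (e :: l) (x t) (y t) * deriv w t) = fun t =>
        e.1 * (x t ^ e.2.1 * y t ^ e.2.2 * deriv w t) + termSum l (x t) (y t) * deriv w t := by
      ext t
      simp only [termSum, List.map_cons, List.sum_cons]
      ring
    rw [hsplit, intervalIntegral.integral_add (Continuous.intervalIntegrable (by fun_prop) _ _)
      (Continuous.intervalIntegrable (by fun_prop) _ _), intervalIntegral.integral_const_mul, ih,
      List.map_cons, List.sum_cons]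

theorem integral_eval_mul_deriv {w : ℝ → ℝ} (hx : Continuous x) (hy : Continuous y)
    (hw : Continuous (deriv w)) (P : MvPolynomial (Fin 2) ℝ) :
    ∫ t in (0:ℝ)..T, MvPolynomial.eval ![x t, y t] P * deriv w t =
      ∑ m ∈ P.support,
        MvPolynomial.coeff m P * ∫ t in (0:ℝ)..T, x t ^ m 0 * y t ^ m 1 * deriv w t := by
  simp only [MvPolynomial.eval_eq', Fin.prod_univ_two, Matrix.cons_val_zero, Matrix.cons_val_one,
    Finset.sum_mul]
  rw [intervalIntegral.integral_finsetSum fun m _ =>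
    Continuous.intervalIntegrable (by fun_prop) _ _]
  refine Finset.sum_congr rfl fun m _ => ?_
  rw [← intervalIntegral.integral_const_mul]
  simp only [mul_assoc]

namespace IsClosedC1Curve

variable (hγ : IsClosedC1Curve x y T)
include hγ

theorem sum_lineInt_add_sum_lineIntDy_eq_zero (l l' : List (ℝ × ℕ × ℕ)) (F : ℝ → ℝ)
    (hF : ∀ t, HasDerivAt F
      (termSum l (x t) (y t) * deriv x t + termSum l' (x t) (y t) * deriv y t) t)
    (hFT : F T = F 0) :
    (l.map fun e => e.1 * lineInt x y T e.2.1 e.2.2).sum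
      + (l'.map fun e => e.1 * lineIntDy x y T e.2.1 e.2.2).sum = 0 := by
  have hx := hγ.contDiff_x.continuous
  have hy := hγ.contDiff_y.continuous
  have hdx := hγ.contDiff_x.continuous_deriv le_rfl
  have hdy := hγ.contDiff_y.continuous_deriv le_rfl
  have hl : Continuous fun t => termSum l (x t) (y t) :=
    continuous_list_sum l fun e _ => by fun_prop
  have hl' : Continuous fun t => termSum l' (x t) (y t) :=
    continuous_list_sum l' fun e _ => by fun_prop
  simp only [lineInt, lineIntDy]
  rw [← integral_termSum_mul_deriv hx hy hdx, ← integral_termSum_mul_deriv hx hy hdy,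
    ← intervalIntegral.integral_add (Continuous.intervalIntegrable (by fun_prop) _ _)
      (Continuous.intervalIntegrable (by fun_prop) _ _),
    intervalIntegral.integral_eq_sub_of_hasDerivAt (fun t _ => hF t)
      (Continuous.intervalIntegrable (by fun_prop) _ _), hFT, sub_self]

theorem hasDerivAt_x (t : ℝ) : HasDerivAt x (deriv x t) t :=
  (hγ.contDiff_x.differentiable one_ne_zero t).hasDerivAt

theorem hasDerivAt_y (t : ℝ) : HasDerivAt y (deriv y t) t :=
  (hγ.contDiff_y.differentiable one_ne_zero t).hasDerivAt

theorem lineInt_exact (m n : ℕ) :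
    m * lineInt x y T (m - 1) n + n * lineIntDy x y T m (n - 1) = 0 := by
  simpa using hγ.sum_lineInt_add_sum_lineIntDy_eq_zero [(m, m - 1, n)] [(n, m, n - 1)]
    (fun t => x t ^ m * y t ^ n)
    (fun t => (((hγ.hasDerivAt_x t).fun_pow m).fun_mul
      ((hγ.hasDerivAt_y t).fun_pow n)).congr_deriv (by
        simp only [termSum, List.map_cons, List.map_nil, List.sum_cons, List.sum_nil]
        ring))
    (by rw [hγ.x_closed, hγ.y_closed])

theorem lineInt_zero_right (i : ℕ) : lineInt x y T i 0 = 0 := by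
  simpa [Nat.cast_add_one_ne_zero] using hγ.lineInt_exact (i + 1) 0

theorem lineIntDy_zero_left (j : ℕ) : lineIntDy x y T 0 j = 0 := by
  simpa [Nat.cast_add_one_ne_zero] using hγ.lineInt_exact 0 (j + 1)

theorem lineIntDy_succ_left (p q : ℕ) :
    (q + 1) * lineIntDy x y T (p + 1) q = -((p + 1) * lineInt x y T p (q + 1)) := by
  have := hγ.lineInt_exact (p + 1) (q + 1)
  simp only [Nat.add_sub_cancel] at this
  push_cast at this
  linear_combination this

variable {a b c h : ℝ} (hH : ∀ t, Hfun a b c (x t) (y t) = h)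
include hH

theorem lineInt_level_relation (i j : ℕ) :
    c * lineInt x y T i (j + 4) - h * lineInt x y T i j + lineInt x y T (i + 2) j
      - lineInt x y T i (j + 2) + a * lineInt x y T (i + 4) j
      + b * lineInt x y T (i + 2) (j + 2) = 0 := by
  simp only [Hfun] at hH
  have := hγ.sum_lineInt_add_sum_lineIntDy_eq_zero
    [(c, i, j + 4), (-h, i, j), (1, i + 2, j), (-1, i, j + 2), (a, i + 4, j), (b, i + 2, j + 2)]
    [] (fun _ => 0)
    (fun t => (hasDerivAt_const t 0).congr_deriv (by
      simp only [termSum, List.map_cons, List.map_nil, List.sum_cons, List.sum_nil]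
      linear_combination (-(x t ^ i * y t ^ j * deriv x t)) * hH t)) rfl
  simp only [List.map_cons, List.map_nil, List.sum_cons, List.sum_nil] at this
  linear_combination this

theorem deriv_Hfun_eq_zero (t : ℝ) :
    (2 * x t + 4 * a * x t ^ 3 + 2 * b * x t * y t ^ 2) * deriv x t
      + (-(2 * y t) + 4 * c * y t ^ 3 + 2 * b * x t ^ 2 * y t) * deriv y t = 0 := by
  refine (hasDerivAt_Hfun a b c (hγ.hasDerivAt_x t) (hγ.hasDerivAt_y t)).unique ?_
  simpa only [hH] using hasDerivAt_const t h

theorem lineInt_dH_relation (i j : ℕ) :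
    2 * lineInt x y T (i + 1) j + 4 * a * lineInt x y T (i + 3) j
      + 2 * b * lineInt x y T (i + 1) (j + 2) - 2 * lineIntDy x y T i (j + 1)
      + 4 * c * lineIntDy x y T i (j + 3) + 2 * b * lineIntDy x y T (i + 2) (j + 1) = 0 := by
  have := hγ.sum_lineInt_add_sum_lineIntDy_eq_zero
    [(2, i + 1, j), (4 * a, i + 3, j), (2 * b, i + 1, j + 2)]
    [(-2, i, j + 1), (4 * c, i, j + 3), (2 * b, i + 2, j + 1)] (fun _ => 0)
    (fun t => (hasDerivAt_const t 0).congr_deriv (by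
      simp only [termSum, List.map_cons, List.map_nil, List.sum_cons, List.sum_nil]
      linear_combination (-(x t ^ i * y t ^ j)) * hγ.deriv_Hfun_eq_zero hH t)) rfl
  simp only [List.map_cons, List.map_nil, List.sum_cons, List.sum_nil] at this
  linear_combination this

theorem lineInt_dH_relation_succ (i j : ℕ) :
    2 * a * (j + 2) * (j + 4) * lineInt x y T (i + 4) j
      + (j + 2) * (j + 4) * lineInt x y T (i + 2) j
      + b * (j + 4) * ((j : ℝ) - i - 1) * lineInt x y T (i + 2) (j + 2)
      + (i + 1) * (j + 4) * lineInt x y T i (j + 2)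
      - 2 * c * (i + 1) * (j + 2) * lineInt x y T i (j + 4) = 0 := by
  have h₁ := hγ.lineIntDy_succ_left i (j + 1)
  have h₂ := hγ.lineIntDy_succ_left i (j + 3)
  have h₃ := hγ.lineIntDy_succ_left (i + 2) (j + 1)
  push_cast at h₁ h₂ h₃
  linear_combination ((j + 2) * (j + 4) / 2 : ℝ) * hγ.lineInt_dH_relation hH (i + 1) j
    + (j + 4 : ℝ) * h₁ - 2 * c * (j + 2) * h₂ - b * (j + 4) * h₃

theorem lineInt_dH_relation_zero (j : ℕ) :
    2 * a * (j + 2) * lineInt x y T 3 j + (j + 2) * lineInt x y T 1 j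
      + b * j * lineInt x y T 1 (j + 2) = 0 := by
  have h₁ := hγ.lineIntDy_succ_left 1 (j + 1)
  push_cast at h₁
  linear_combination ((j + 2) / 2 : ℝ) * hγ.lineInt_dH_relation hH 0 j - b * h₁
    + (j + 2 : ℝ) * hγ.lineIntDy_zero_left (j + 1)
    - 2 * c * (j + 2) * hγ.lineIntDy_zero_left (j + 3)

end IsClosedC1Curve

end Curve

section Reduction

open Polynomial

def WeightBounded (d : ℕ) (A : Fin 3 → Fin 3 → ℝ[X]) : Prop :=
  ∀ p q, ∀ k ∈ (A p q).support, 4 * k + p + q + 1 ≤ d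

def ReducesToBasis (a b c : ℝ) (d : ℕ) (φ : ℝ → (ℝ → ℝ) → (ℝ → ℝ) → ℝ → ℝ) : Prop :=
  ∃ A, WeightBounded d A ∧ ∀ h x y T, IsClosedC1Curve x y T →
    (∀ t, Hfun a b c (x t) (y t) = h) →
      φ h x y T = ∑ p, ∑ q, (A p q).eval h * lineInt x y T p (q + 1)

namespace WeightBounded

variable {d : ℕ} {A : Fin 3 → Fin 3 → ℝ[X]}

theorem degree_lt (hA : WeightBounded d A) {p q : Fin 3} {m : ℕ} (hm : d < 4 * m + p + q + 1) :
    (A p q).degree < m := by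
  rw [degree_lt_iff_coeff_zero]
  intro k hk
  by_contra hne
  have := hA p q k (mem_support_iff.mpr hne)
  omega

theorem degree_le (hA : WeightBounded d A) {p q : Fin 3} {m : ℕ} (hm : d < 4 * m + p + q + 5) :
    (A p q).degree ≤ m := by
  rw [degree_le_iff_coeff_zero]
  intro k hk
  by_contra hne
  have := hA p q k (mem_support_iff.mpr hne)
  have : m < k := by exact_mod_cast hk
  omega

end WeightBounded

namespace ReducesToBasis

variable {a b c : ℝ} {d e : ℕ} {φ ψ : ℝ → (ℝ → ℝ) → (ℝ → ℝ) → ℝ → ℝ}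

theorem mono (hφ : ReducesToBasis a b c d φ) (hde : d ≤ e) : ReducesToBasis a b c e φ :=
  let ⟨A, hA, hφA⟩ := hφ
  ⟨A, fun p q k hk => (hA p q k hk).trans hde, hφA⟩

theorem congr (hφ : ReducesToBasis a b c d φ)
    (hψ : ∀ h x y T, IsClosedC1Curve x y T → (∀ t, Hfun a b c (x t) (y t) = h) →
      ψ h x y T = φ h x y T) :
    ReducesToBasis a b c d ψ :=
  let ⟨A, hA, hφA⟩ := hφ
  ⟨A, hA, fun h x y T hγ hH => (hψ h x y T hγ hH).trans (hφA h x y T hγ hH)⟩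

theorem zero : ReducesToBasis a b c d fun _ _ _ _ => 0 :=
  ⟨0, fun p q k hk => by simp at hk, fun h x y T _ _ => by simp⟩

theorem add (hφ : ReducesToBasis a b c d φ) (hψ : ReducesToBasis a b c e ψ) :
    ReducesToBasis a b c (max d e) fun h x y T => φ h x y T + ψ h x y T := by
  obtain ⟨A, hA, hφA⟩ := hφ
  obtain ⟨B, hB, hψB⟩ := hψ
  refine ⟨A + B, fun p q k hk => ?_, fun h x y T hγ hH => ?_⟩
  · rcases Finset.mem_union.mp (support_add hk) with hk | hk
    · exact (hA p q k hk).trans (le_max_left d e)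
    · exact (hB p q k hk).trans (le_max_right d e)
  · simp only [hφA h x y T hγ hH, hψB h x y T hγ hH, Pi.add_apply, eval_add, add_mul,
      Finset.sum_add_distrib]

theorem const_mul (r : ℝ) (hφ : ReducesToBasis a b c d φ) :
    ReducesToBasis a b c d fun h x y T => r * φ h x y T := by
  obtain ⟨A, hA, hφA⟩ := hφ
  refine ⟨r • A, fun p q k hk => hA p q k (support_smul r _ hk), fun h x y T hγ hH => ?_⟩
  simp only [hφA h x y T hγ hH, Pi.smul_apply, eval_smul, smul_eq_mul, Finset.mul_sum, mul_assoc]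

theorem sub (hφ : ReducesToBasis a b c d φ) (hψ : ReducesToBasis a b c e ψ) :
    ReducesToBasis a b c (max d e) fun h x y T => φ h x y T - ψ h x y T :=
  (hφ.add (hψ.const_mul (-1))).congr fun _ _ _ _ _ _ => by ring

theorem h_mul (hφ : ReducesToBasis a b c d φ) :
    ReducesToBasis a b c (d + 4) fun h x y T => h * φ h x y T := by
  obtain ⟨A, hA, hφA⟩ := hφ
  refine ⟨fun p q => X * A p q, fun p q k hk => ?_, fun h x y T hγ hH => ?_⟩
  · obtain _ | k := k
    · simp at hk
    · have := hA p q k (by simpa [mem_support_iff, coeff_X_mul] using hk)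
      omega
  · simp only [hφA h x y T hγ hH, eval_mul, eval_X, Finset.mul_sum, mul_assoc]

theorem sum {ι : Type*} (s : Finset ι) {φ : ι → ℝ → (ℝ → ℝ) → (ℝ → ℝ) → ℝ → ℝ}
    (hφ : ∀ i ∈ s, ReducesToBasis a b c d (φ i)) :
    ReducesToBasis a b c d fun h x y T => ∑ i ∈ s, φ i h x y T := by
  classical
  induction s using Finset.induction_on with
  | empty => simpa using zero
  | insert i s hi ih =>
    simp only [Finset.sum_insert hi]
    exact ((hφ i (s.mem_insert_self i)).add
      (ih fun j hj => hφ j (Finset.mem_insert_of_mem hj))).mono (max_self d).le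

theorem of_mul_eq {K : ℝ} (hK : K ≠ 0) (hψ : ReducesToBasis a b c e ψ) (hed : e ≤ d)
    (heq : ∀ h x y T, IsClosedC1Curve x y T → (∀ t, Hfun a b c (x t) (y t) = h) →
      K * φ h x y T = ψ h x y T) :
    ReducesToBasis a b c d φ :=
  ((hψ.const_mul K⁻¹).mono hed).congr fun h x y T hγ hH => by
    rw [← heq h x y T hγ hH, inv_mul_cancel_left₀ hK]

end ReducesToBasis

noncomputable def lineIntFun (i j : ℕ) : ℝ → (ℝ → ℝ) → (ℝ → ℝ) → ℝ → ℝ :=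
  fun _ x y T => lineInt x y T i j

abbrev LineIntReduces (a b c : ℝ) (i j : ℕ) : Prop :=
  ReducesToBasis a b c (i + j) (lineIntFun i j)

variable {a b c : ℝ}

theorem lineIntReduces_basis {p q : ℕ} (hp : p < 3) (hq : q < 3) :
    LineIntReduces a b c p (q + 1) := by
  refine ⟨fun p' q' => if (p' : ℕ) = p ∧ (q' : ℕ) = q then 1 else 0, fun p' q' k hk => ?_,
    fun h x y T _ _ => ?_⟩
  · by_cases hpq : (p' : ℕ) = p ∧ (q' : ℕ) = q
    · obtain ⟨rfl, rfl⟩ := hpq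
      simp only [and_self, if_true, mem_support_iff, coeff_one, ne_eq, ite_eq_right_iff,
        one_ne_zero, imp_false, not_not] at hk
      omega
    · simp [hpq] at hk
  · interval_cases p <;> interval_cases q <;> simp [lineIntFun, Fin.sum_univ_three]

theorem lineIntReduces_zero_right (i : ℕ) : LineIntReduces a b c i 0 :=
  ReducesToBasis.zero.congr fun _ _ _ _ hγ _ => hγ.lineInt_zero_right i

theorem lineIntReduces_add_four_left (ha : a ≠ 0) {i j : ℕ} (h₀ : LineIntReduces a b c i j)
    (h₁ : LineIntReduces a b c i (j + 4)) (h₂ : LineIntReduces a b c (i + 2) j)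
    (h₃ : LineIntReduces a b c i (j + 2)) (h₄ : LineIntReduces a b c (i + 2) (j + 2)) :
    LineIntReduces a b c (i + 4) j :=
  .of_mul_eq ha ((((h₀.h_mul.sub (h₁.const_mul c)).sub h₂).add h₃).sub (h₄.const_mul b))
    (by omega) fun h x y T hγ hH => by
      simp only [lineIntFun]
      linear_combination hγ.lineInt_level_relation hH i j

theorem lineIntReduces_three_left (ha : a ≠ 0) {j : ℕ} (h₀ : LineIntReduces a b c 1 j)
    (h₁ : LineIntReduces a b c 1 (j + 2)) : LineIntReduces a b c 3 j :=
  .of_mul_eq (K := 2 * a * (j + 2)) (by positivity)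
    ((h₀.const_mul (-(j + 2))).sub (h₁.const_mul (b * j))) (by omega) fun h x y T hγ hH => by
      simp only [lineIntFun]
      linear_combination hγ.lineInt_dH_relation_zero hH j

theorem lineIntReduces_zero_add_four (hc : c ≠ 0) {q : ℕ} (h₀ : LineIntReduces a b c 0 q)
    (h₁ : LineIntReduces a b c 0 (q + 2)) (h₂ : LineIntReduces a b c 2 q)
    (h₃ : LineIntReduces a b c 2 (q + 2)) : LineIntReduces a b c 0 (q + 4) :=
  .of_mul_eq (K := 2 * c * (q + 2) * (q + 5)) (by positivity)
    ((((h₀.h_mul.const_mul (2 * (q + 2) * (q + 4))).add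
      (h₁.const_mul ((q + 4) * (2 * q + 5)))).sub (h₂.const_mul ((q + 2) * (q + 4)))).sub
      (h₃.const_mul (b * (q + 4) * (q + 5))))
    (by omega) fun h x y T hγ hH => by
      simp only [lineIntFun]
      linear_combination -hγ.lineInt_dH_relation_succ hH 0 q
        + 2 * (q + 2) * (q + 4) * hγ.lineInt_level_relation hH 0 q

theorem lineIntReduces_one_add_four (hD : b ^ 2 - 4 * a * c ≠ 0) {q : ℕ}
    (h₀ : LineIntReduces a b c 1 q) (h₁ : LineIntReduces a b c 1 (q + 2)) :
    LineIntReduces a b c 1 (q + 4) :=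
  .of_mul_eq (K := (q + 2) * (q + 6) * (b ^ 2 - 4 * a * c)) (by positivity)
    (((h₀.const_mul (-((q + 2) * (q + 4)))).sub
      (h₀.h_mul.const_mul (4 * a * (q + 2) * (q + 4)))).sub
      (h₁.const_mul (2 * (q + 3) * (q + 4) * (b + 2 * a))))
    (by omega) fun h x y T hγ hH => by
      simp only [lineIntFun]
      linear_combination (norm := (push_cast [add_assoc]; ring1))
        (q + 4) * hγ.lineInt_dH_relation_zero hH q
        + b * (q + 6) * hγ.lineInt_dH_relation_zero hH (q + 2)
        + 2 * a * hγ.lineInt_dH_relation_succ hH 1 q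
        - 4 * a * (q + 2) * (q + 4) * hγ.lineInt_level_relation hH 1 q

theorem lineIntReduces_two_add_four (hD : b ^ 2 - 4 * a * c ≠ 0) {q : ℕ}
    (h₀ : LineIntReduces a b c 0 (q + 2)) (h₁ : LineIntReduces a b c 0 (q + 4))
    (h₂ : LineIntReduces a b c 2 q) (h₃ : LineIntReduces a b c 2 (q + 2)) :
    LineIntReduces a b c 2 (q + 4) :=
  .of_mul_eq (K := (q + 2) * (q + 7) * (b ^ 2 - 4 * a * c)) (by positivity)
    ((((((h₀.const_mul (-(q + 4))).add (h₀.h_mul.const_mul (2 * b * (q + 4)))).add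
      (h₁.const_mul ((q + 2) * (b + 2 * c)))).sub (h₂.const_mul ((q + 2) * (q + 4)))).sub
      (h₂.h_mul.const_mul (4 * a * (q + 2) * (q + 4)))).sub
      (h₃.const_mul ((q + 4) * (2 * q + 7) * (b + 2 * a))))
    (by omega) fun h x y T hγ hH => by
      simp only [lineIntFun]
      linear_combination (norm := (push_cast [add_assoc]; ring1))
        hγ.lineInt_dH_relation_succ hH 0 q + b * hγ.lineInt_dH_relation_succ hH 0 (q + 2)
        + 2 * a * hγ.lineInt_dH_relation_succ hH 2 q
        + 2 * b * (q + 4) * hγ.lineInt_level_relation hH 0 (q + 2)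
        - 4 * a * (q + 2) * (q + 4) * hγ.lineInt_level_relation hH 2 q

theorem lineIntReduces_all (ha : a ≠ 0) (hc : c ≠ 0) (hD : b ^ 2 - 4 * a * c ≠ 0) :
    ∀ i j : ℕ, LineIntReduces a b c i j
  | i, 0 => lineIntReduces_zero_right i
  | i + 4, j => lineIntReduces_add_four_left ha (lineIntReduces_all ha hc hD i j)
      (lineIntReduces_all ha hc hD i (j + 4)) (lineIntReduces_all ha hc hD (i + 2) j)
      (lineIntReduces_all ha hc hD i (j + 2)) (lineIntReduces_all ha hc hD (i + 2) (j + 2))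
  | 3, j => lineIntReduces_three_left ha (lineIntReduces_all ha hc hD 1 j)
      (lineIntReduces_all ha hc hD 1 (j + 2))
  | 0, q + 4 => lineIntReduces_zero_add_four hc (lineIntReduces_all ha hc hD 0 q)
      (lineIntReduces_all ha hc hD 0 (q + 2)) (lineIntReduces_all ha hc hD 2 q)
      (lineIntReduces_all ha hc hD 2 (q + 2))
  | 1, q + 4 => lineIntReduces_one_add_four hD (lineIntReduces_all ha hc hD 1 q)
      (lineIntReduces_all ha hc hD 1 (q + 2))
  | 2, q + 4 => lineIntReduces_two_add_four hD (lineIntReduces_all ha hc hD 0 (q + 2))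
      (lineIntReduces_all ha hc hD 0 (q + 4)) (lineIntReduces_all ha hc hD 2 q)
      (lineIntReduces_all ha hc hD 2 (q + 2))
  | 0, 1 | 0, 2 | 0, 3 | 1, 1 | 1, 2 | 1, 3 | 2, 1 | 2, 2 | 2, 3 =>
      lineIntReduces_basis (by decide) (by decide)
-- Within one total degree `I_{2,·}` comes first, since `lineIntReduces_zero_add_four` uses it.
termination_by i j => (i + j, if i = 2 then 0 else i + 1)
decreasing_by
  all_goals (rw [Prod.lex_def]; dsimp only; split_ifs <;> first | contradiction | omega)

theorem reducesToBasis_lineIntDy (ha : a ≠ 0) (hc : c ≠ 0) (hD : b ^ 2 - 4 * a * c ≠ 0)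
    (i j : ℕ) : ReducesToBasis a b c (i + j) fun _ x y T => lineIntDy x y T i j := by
  cases i with
  | zero => exact ReducesToBasis.zero.congr fun _ _ _ _ hγ _ => hγ.lineIntDy_zero_left j
  | succ p =>
    exact .of_mul_eq (K := j + 1) (by positivity)
      ((lineIntReduces_all ha hc hD p (j + 1)).const_mul (-(p + 1))) (by omega)
      fun h x y T hγ _ => by
        simp only [lineIntFun]
        linear_combination hγ.lineIntDy_succ_left p j

theorem reducesToBasis_abelianIntegral (ha : a ≠ 0) (hc : c ≠ 0) (hD : b ^ 2 - 4 * a * c ≠ 0)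
    {n : ℕ} {f g : MvPolynomial (Fin 2) ℝ} (hf : f.totalDegree ≤ n) (hg : g.totalDegree ≤ n) :
    ReducesToBasis a b c n fun _ x y T => ∫ t in (0:ℝ)..T,
      (MvPolynomial.eval ![x t, y t] g * deriv x t
        - MvPolynomial.eval ![x t, y t] f * deriv y t) := by
  have hdeg : ∀ {P : MvPolynomial (Fin 2) ℝ} {m}, P.totalDegree ≤ n → m ∈ P.support →
      m 0 + m 1 ≤ n := fun hP hm => by
    simpa [Finsupp.sum_fintype, Fin.sum_univ_two] using (MvPolynomial.le_totalDegree hm).trans hP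
  refine (((ReducesToBasis.sum g.support fun m hm =>
    ((lineIntReduces_all ha hc hD (m 0) (m 1)).const_mul (MvPolynomial.coeff m g)).mono
      (hdeg hg hm)).sub
    (ReducesToBasis.sum f.support fun m hm =>
      ((reducesToBasis_lineIntDy ha hc hD (m 0) (m 1)).const_mul (MvPolynomial.coeff m f)).mono
        (hdeg hf hm))).mono (max_self n).le).congr fun h x y T hγ _ => ?_
  have hx := hγ.contDiff_x.continuous
  have hy := hγ.contDiff_y.continuous
  have hdx := hγ.contDiff_x.continuous_deriv le_rfl
  have hdy := hγ.contDiff_y.continuous_deriv le_rfl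
  have hxy : Continuous fun t => ![x t, y t] := continuous_pi (Fin.forall_fin_two.2 ⟨hx, hy⟩)
  have hgx : Continuous fun t => MvPolynomial.eval ![x t, y t] g * deriv x t :=
    ((MvPolynomial.continuous_eval g).comp hxy).mul hdx
  have hfy : Continuous fun t => MvPolynomial.eval ![x t, y t] f * deriv y t :=
    ((MvPolynomial.continuous_eval f).comp hxy).mul hdy
  rw [intervalIntegral.integral_sub (hgx.intervalIntegrable _ _) (hfy.intervalIntegrable _ _),
    integral_eval_mul_deriv hx hy hdx, integral_eval_mul_deriv hx hy hdy]
  rfl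

end Reduction

/- Degree bounds below of the form `degree < d` encode `degree ≤ d − 1` as an integer
inequality (so `degree < 0` means the polynomial vanishes); note that for natural `n`,
`⌊(n−3)/4⌋ = (n+1)/4 − 1` and `⌊(n−2)/4⌋ = (n+2)/4 − 1` as integers. -/
theorem stmt7_general (a b c : ℝ) (habc : a * c * (b ^ 2 - 4 * a * c) ≠ 0)
    (n : ℕ)
    (f g : MvPolynomial (Fin 2) ℝ)
    (hf : f.totalDegree ≤ n) (hg : g.totalDegree ≤ n) :
    ∃ f1 f2 f3 f4 f5 g1 g2 l1 l2 : Polynomial ℝ,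
      f1.degree ≤ (((n - 1) / 4 : ℕ) : WithBot ℕ) ∧
      f2.degree < (((n + 1) / 4 : ℕ) : WithBot ℕ) ∧
      f3.degree < (((n + 1) / 4 : ℕ) : WithBot ℕ) ∧
      f5.degree < (((n + 1) / 4 : ℕ) : WithBot ℕ) ∧
      f4.degree < (((n - 1) / 4 : ℕ) : WithBot ℕ) ∧
      g1.degree < (((n + 2) / 4 : ℕ) : WithBot ℕ) ∧
      l1.degree < (((n + 2) / 4 : ℕ) : WithBot ℕ) ∧
      g2.degree < ((n / 4 : ℕ) : WithBot ℕ) ∧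
      l2.degree < ((n / 4 : ℕ) : WithBot ℕ) ∧
      ∀ (h : ℝ) (x y : ℝ → ℝ) (T : ℝ), 0 < T →
        ContDiff ℝ 1 x → ContDiff ℝ 1 y →
        (∀ t : ℝ, x (t + T) = x t ∧ y (t + T) = y t) →
        (∀ t : ℝ, Hfun a b c (x t) (y t) = h) →
        (∫ t in (0:ℝ)..T, (MvPolynomial.eval ![x t, y t] g * deriv x t
            - MvPolynomial.eval ![x t, y t] f * deriv y t)) =
          f1.eval h * lineInt x y T 0 1 + f2.eval h * lineInt x y T 0 3
          + f3.eval h * lineInt x y T 2 1 + f4.eval h * lineInt x y T 2 3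
          + f5.eval h * lineInt x y T 1 2
          + g1.eval h * lineInt x y T 1 1 + g2.eval h * lineInt x y T 1 3
          + l1.eval h * lineInt x y T 0 2 + l2.eval h * lineInt x y T 2 2 := by
  have ha : a ≠ 0 := left_ne_zero_of_mul (left_ne_zero_of_mul habc)
  have hc : c ≠ 0 := right_ne_zero_of_mul (left_ne_zero_of_mul habc)
  have hD : b ^ 2 - 4 * a * c ≠ 0 := right_ne_zero_of_mul habc
  obtain ⟨A, hA, hAφ⟩ := reducesToBasis_abelianIntegral ha hc hD hf hg
  refine ⟨A 0 0, A 0 2, A 2 0, A 2 2, A 1 1, A 1 0, A 1 2, A 0 1, A 2 1,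
    hA.degree_le (by omega), hA.degree_lt (by omega), hA.degree_lt (by omega),
    hA.degree_lt (by omega), hA.degree_lt (by omega), hA.degree_lt (by omega),
    hA.degree_lt (by omega), hA.degree_lt (by omega), hA.degree_lt (by omega),
    fun h x y T _ hx hy hper hH => ?_⟩
  have hγ : IsClosedC1Curve x y T :=
    ⟨hx, hy, by simpa using (hper 0).1, by simpa using (hper 0).2⟩
  refine (hAφ h x y T hγ hH).trans ?_
  simp only [Fin.sum_univ_three, Fin.isValue, Fin.coe_ofNat_eq_mod, Nat.zero_mod, zero_add,
    Nat.one_mod, Nat.reduceAdd, Nat.mod_succ]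
  ring

theorem stmt7 (a b c : ℝ) (habc : a * c * (b ^ 2 - 4 * a * c) ≠ 0)
    (n : ℕ) (hn : 1 ≤ n)
    (f g : MvPolynomial (Fin 2) ℝ)
    (hf : f.totalDegree ≤ n) (hg : g.totalDegree ≤ n) :
    ∃ f1 f2 f3 f4 f5 g1 g2 l1 l2 : Polynomial ℝ,
      f1.degree ≤ (((n - 1) / 4 : ℕ) : WithBot ℕ) ∧
      f2.degree < (((n + 1) / 4 : ℕ) : WithBot ℕ) ∧
      f3.degree < (((n + 1) / 4 : ℕ) : WithBot ℕ) ∧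
      f5.degree < (((n + 1) / 4 : ℕ) : WithBot ℕ) ∧
      f4.degree < (((n - 1) / 4 : ℕ) : WithBot ℕ) ∧
      g1.degree < (((n + 2) / 4 : ℕ) : WithBot ℕ) ∧
      l1.degree < (((n + 2) / 4 : ℕ) : WithBot ℕ) ∧
      g2.degree < ((n / 4 : ℕ) : WithBot ℕ) ∧
      l2.degree < ((n / 4 : ℕ) : WithBot ℕ) ∧
      ∀ (h : ℝ) (x y : ℝ → ℝ) (T : ℝ), 0 < T →
        ContDiff ℝ 1 x → ContDiff ℝ 1 y →
        (∀ t : ℝ, x (t + T) = x t ∧ y (t + T) = y t) →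
        (∀ t : ℝ, Hfun a b c (x t) (y t) = h) →
        (∫ t in (0:ℝ)..T, (MvPolynomial.eval ![x t, y t] g * deriv x t
            - MvPolynomial.eval ![x t, y t] f * deriv y t)) =
          f1.eval h * lineInt x y T 0 1 + f2.eval h * lineInt x y T 0 3
          + f3.eval h * lineInt x y T 2 1 + f4.eval h * lineInt x y T 2 3
          + f5.eval h * lineInt x y T 1 2
          + g1.eval h * lineInt x y T 1 1 + g2.eval h * lineInt x y T 1 3
          + l1.eval h * lineInt x y T 0 2 + l2.eval h * lineInt x y T 2 2 :=
  stmt7_general a b c habc n f g hf hg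
end

section
/- (Singular points in case D₆⁺) Let a, b, c be real numbers with c > 0, b² − 4ac < 0, and b + 2c < 0. Then a > c > 0, b < 0, and b + 2a > 0; and the Hamiltonian vector field X_H(x,y) = (2y(b·x² + 2c·y² − 1), −2x(1 + 2a·x² + b·y²)) vanishes at a point (x,y) ∈ ℝ² if and only if (x,y) is one of the following seven points: (0,0); (0, ±1/√(2c)); or (ε₁·√((b+2c)/(b²−4ac)), ε₂·√((b+2a)/(4ac−b²))) with ε₁, ε₂ ∈ {+1, −1}. Moreover H(0,0) = 0, H(0, ±1/√(2c)) = −1/(4c), and H takes the value (a+b+c)/(b²−4ac) at each of the last four points. -/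
section Parameters

variable {a b c : ℝ}

theorem lt_of_discr_neg (hc : 0 < c) (hD : b ^ 2 - 4 * a * c < 0) (hb2c : b + 2 * c < 0) :
    c < a := by
  nlinarith [mul_pos (by linarith : (0 : ℝ) < -b - 2 * c) (by linarith : (0 : ℝ) < -b + 2 * c)]

theorem add_two_mul_pos_of_discr_neg (hc : 0 < c) (hD : b ^ 2 - 4 * a * c < 0)
    (hb2c : b + 2 * c < 0) : 0 < b + 2 * a := by
  nlinarith [mul_pos_of_neg_of_neg (by linarith : b < 0) hb2c]

end Parameters

theorem sq_eq_iff_exists_sign_mul_sqrt {p : ℝ} (hp : 0 ≤ p) (x : ℝ) :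
    x ^ 2 = p ↔ ∃ ε : ℝ, (ε = 1 ∨ ε = -1) ∧ x = ε * Real.sqrt p := by
  rw [← Real.sq_sqrt hp, sq_eq_sq_iff_eq_or_eq_neg, Real.sq_sqrt hp]
  constructor
  · rintro (h | h)
    · exact ⟨1, .inl rfl, by rw [h, one_mul]⟩
    · exact ⟨-1, .inr rfl, by rw [h, neg_one_mul]⟩
  · rintro ⟨ε, rfl | rfl, rfl⟩
    · exact .inl (one_mul _)
    · exact .inr (neg_one_mul _)

theorem two_mul_mul_sq_eq_one_iff {c : ℝ} (hc : 0 < c) (y : ℝ) :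
    2 * c * y ^ 2 = 1 ↔ y = 1 / Real.sqrt (2 * c) ∨ y = -(1 / Real.sqrt (2 * c)) := by
  have hs : (1 / Real.sqrt (2 * c)) ^ 2 = 1 / (2 * c) := by
    rw [div_pow, one_pow, Real.sq_sqrt (by positivity)]
  rw [← sq_eq_sq_iff_eq_or_eq_neg, hs, eq_div_iff (by positivity), mul_comm]

section Equilibria

variable (a b c : ℝ)

theorem hamiltonianField_eq_zero_iff (x y : ℝ) :
    (2 * y * (b * x ^ 2 + 2 * c * y ^ 2 - 1) = 0 ∧
      -(2 * x) * (1 + 2 * a * x ^ 2 + b * y ^ 2) = 0) ↔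
    (y = 0 ∨ b * x ^ 2 + 2 * c * y ^ 2 = 1) ∧ (x = 0 ∨ 2 * a * x ^ 2 + b * y ^ 2 = -1) := by
  simp only [mul_eq_zero, neg_eq_zero, two_ne_zero, false_or, sub_eq_zero]
  constructor <;> rintro ⟨h₁ | h₁, h₂ | h₂⟩ <;> first
    | exact ⟨.inl h₁, .inl h₂⟩ | exact ⟨.inl h₁, .inr (by linarith)⟩
    | exact ⟨.inr h₁, .inl h₂⟩ | exact ⟨.inr h₁, .inr (by linarith)⟩

theorem Hfun_of_hamiltonianField_eq_zero {x y : ℝ}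
    (h : 2 * y * (b * x ^ 2 + 2 * c * y ^ 2 - 1) = 0 ∧
      -(2 * x) * (1 + 2 * a * x ^ 2 + b * y ^ 2) = 0) :
    Hfun a b c x y = (x ^ 2 - y ^ 2) / 2 := by
  unfold Hfun
  linear_combination (y / 4) * h.1 - (x / 4) * h.2

variable {a b c}

theorem equilibrium_sq_iff (hD : b ^ 2 - 4 * a * c ≠ 0) (X Y : ℝ) :
    (b * X + 2 * c * Y = 1 ∧ 2 * a * X + b * Y = -1) ↔
    X = (b + 2 * c) / (b ^ 2 - 4 * a * c) ∧ Y = (b + 2 * a) / (4 * a * c - b ^ 2) := by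
  have hD' : 4 * a * c - b ^ 2 ≠ 0 := fun h => hD (by linear_combination -h)
  rw [eq_div_iff hD, eq_div_iff hD']
  constructor
  · rintro ⟨h₁, h₂⟩
    exact ⟨by linear_combination b * h₁ - 2 * c * h₂, by linear_combination 2 * a * h₁ - b * h₂⟩
  · rintro ⟨h₁, h₂⟩
    refine ⟨mul_left_cancel₀ hD ?_, mul_left_cancel₀ hD ?_⟩
    · linear_combination b * h₁ - 2 * c * h₂
    · linear_combination 2 * a * h₁ - b * h₂

theorem equilibrium_iff_of_pos (ha : 0 < a) (hD : b ^ 2 - 4 * a * c ≠ 0) (x y : ℝ) :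
    ((y = 0 ∨ b * x ^ 2 + 2 * c * y ^ 2 = 1) ∧ (x = 0 ∨ 2 * a * x ^ 2 + b * y ^ 2 = -1)) ↔
    (x = 0 ∧ y = 0) ∨ (x = 0 ∧ 2 * c * y ^ 2 = 1) ∨
      (x ^ 2 = (b + 2 * c) / (b ^ 2 - 4 * a * c) ∧
        y ^ 2 = (b + 2 * a) / (4 * a * c - b ^ 2)) := by
  rw [← equilibrium_sq_iff hD]
  constructor
  · rintro ⟨rfl | h₁, rfl | h₂⟩
    · exact .inl ⟨rfl, rfl⟩
    · nlinarith [sq_nonneg x]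
    · exact .inr (.inl ⟨rfl, by simpa using h₁⟩)
    · exact .inr (.inr ⟨h₁, h₂⟩)
  · rintro (⟨rfl, rfl⟩ | ⟨rfl, h⟩ | ⟨h₁, h₂⟩)
    · exact ⟨.inl rfl, .inl rfl⟩
    · exact ⟨.inr (by simpa using h), .inl rfl⟩
    · exact ⟨.inr h₁, .inr h₂⟩

end Equilibria

theorem stmt8 (a b c : ℝ) (hc : 0 < c) (hD : b ^ 2 - 4 * a * c < 0) (hb2c : b + 2 * c < 0) :
    (c < a ∧ 0 < c ∧ b < 0 ∧ 0 < b + 2 * a) ∧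
    (∀ x y : ℝ,
      (2 * y * (b * x ^ 2 + 2 * c * y ^ 2 - 1) = 0 ∧
       -(2 * x) * (1 + 2 * a * x ^ 2 + b * y ^ 2) = 0) ↔
      ((x = 0 ∧ y = 0) ∨
       (x = 0 ∧ y = 1 / Real.sqrt (2 * c)) ∨
       (x = 0 ∧ y = -(1 / Real.sqrt (2 * c))) ∨
       (∃ ε₁ ε₂ : ℝ, (ε₁ = 1 ∨ ε₁ = -1) ∧ (ε₂ = 1 ∨ ε₂ = -1) ∧
          x = ε₁ * Real.sqrt ((b + 2 * c) / (b ^ 2 - 4 * a * c)) ∧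
          y = ε₂ * Real.sqrt ((b + 2 * a) / (4 * a * c - b ^ 2))))) ∧
    Hfun a b c 0 0 = 0 ∧
    Hfun a b c 0 (1 / Real.sqrt (2 * c)) = -1 / (4 * c) ∧
    Hfun a b c 0 (-(1 / Real.sqrt (2 * c))) = -1 / (4 * c) ∧
    (∀ ε₁ ε₂ : ℝ, (ε₁ = 1 ∨ ε₁ = -1) → (ε₂ = 1 ∨ ε₂ = -1) →
      Hfun a b c (ε₁ * Real.sqrt ((b + 2 * c) / (b ^ 2 - 4 * a * c)))
          (ε₂ * Real.sqrt ((b + 2 * a) / (4 * a * c - b ^ 2)))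
        = (a + b + c) / (b ^ 2 - 4 * a * c)) := by
  have hca := lt_of_discr_neg hc hD hb2c
  have hb2a := add_two_mul_pos_of_discr_neg hc hD hb2c
  have hX : 0 ≤ (b + 2 * c) / (b ^ 2 - 4 * a * c) := (div_pos_of_neg_of_neg hb2c hD).le
  have hY : 0 ≤ (b + 2 * a) / (4 * a * c - b ^ 2) := (div_pos hb2a (by linarith)).le
  have hcrit (x y : ℝ) := (hamiltonianField_eq_zero_iff a b c x y).trans
    (equilibrium_iff_of_pos (hc.trans hca) hD.ne x y)
  have hHfun {x y : ℝ} (h) := Hfun_of_hamiltonianField_eq_zero a b c ((hcrit x y).mpr h)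
  have hyaxis {y : ℝ} (hy : 2 * c * y ^ 2 = 1) : Hfun a b c 0 y = -1 / (4 * c) := by
    rw [hHfun (.inr (.inl ⟨rfl, hy⟩))]
    field_simp
    linear_combination -2 * hy
  refine ⟨⟨hca, hc, by linarith, hb2a⟩, fun x y => ?_, by simp [Hfun],
    hyaxis ((two_mul_mul_sq_eq_one_iff hc _).mpr (.inl rfl)),
    hyaxis ((two_mul_mul_sq_eq_one_iff hc _).mpr (.inr rfl)), fun ε₁ ε₂ h₁ h₂ => ?_⟩
  · rw [hcrit, two_mul_mul_sq_eq_one_iff hc, sq_eq_iff_exists_sign_mul_sqrt hX,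
      sq_eq_iff_exists_sign_mul_sqrt hY, and_or_left, or_assoc, exists_and_exists_comm]
    simp only [and_and_and_comm]
    simp only [and_assoc]
  · have hx := (sq_eq_iff_exists_sign_mul_sqrt hX _).mpr ⟨ε₁, h₁, rfl⟩
    have hy := (sq_eq_iff_exists_sign_mul_sqrt hY _).mpr ⟨ε₂, h₂, rfl⟩
    rw [hHfun (.inr (.inr ⟨hx, hy⟩)), hx, hy]
    rw [← neg_sub (b ^ 2) (4 * a * c), div_neg]
    ring
end

section
/- (Ordering of the critical values in case D₆⁺) Let a, b, c be real numbers with c > 0, b² − 4ac < 0, and b + 2c < 0. Then (a+b+c)/(b²−4ac) < −1/(4c) < −1/(4a) < 0. -/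
theorem stmt9 (a b c : ℝ) (hc : 0 < c) (hD : b ^ 2 - 4 * a * c < 0) (hb2c : b + 2 * c < 0) :
    (a + b + c) / (b ^ 2 - 4 * a * c) < -1 / (4 * c) ∧
    -1 / (4 * c) < -1 / (4 * a) ∧
    -1 / (4 * a) < 0 := by
  have ha : 0 < a := by nlinarith [sq_nonneg b]
  have hca : c < a := by nlinarith
  refine ⟨?_, ?_, ?_⟩
  · have hpos : (0:ℝ) < -(b ^ 2 - 4 * a * c) := by linarith
    rw [show (a + b + c) / (b ^ 2 - 4 * a * c)
        = (-(a + b + c)) / (-(b ^ 2 - 4 * a * c)) by rw [neg_div_neg_eq],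
      div_lt_div_iff₀ hpos (by positivity)]
    nlinarith [mul_pos (neg_pos.2 hb2c) (neg_pos.2 hb2c)]
  · rw [div_lt_div_iff₀ (by positivity) (by positivity)]
    linarith
  · exact div_neg_of_neg_of_pos (by norm_num) (by linarith)
end

section
/- (Linearization types in case D₆⁺) Let a, b, c be real numbers with c > 0, b² − 4ac < 0, and b + 2c < 0, and let Hess H denote the 2×2 Hessian matrix of H. Then det Hess H(0,0) = −4 < 0; det Hess H(0, ±1/√(2c)) = 4(b+2c)/c < 0; and det Hess H > 0 at each of the four points (ε₁·√((b+2c)/(b²−4ac)), ε₂·√((b+2a)/(4ac−b²))), ε₁, ε₂ ∈ {+1, −1}. Consequently (0,0) and (0, ±1/√(2c)) are elementary saddles of the Hamiltonian system and the other four singular points are elementary centers of the linearized system. -/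
/-- Second partial derivative ∂²H/∂x² at (x,y). -/
noncomputable def Hxx (a b c x y : ℝ) : ℝ :=
  deriv (fun u => deriv (fun v => Hfun a b c v y) u) x

/-- Second partial derivative ∂²H/∂y² at (x,y). -/
noncomputable def Hyy (a b c x y : ℝ) : ℝ :=
  deriv (fun u => deriv (fun v => Hfun a b c x v) u) y

/-- Mixed second partial derivative ∂²H/∂x∂y at (x,y). -/
noncomputable def Hxy (a b c x y : ℝ) : ℝ :=
  deriv (fun u => deriv (fun v => Hfun a b c u v) y) x

/-- Determinant of the Hessian matrix of H at (x,y). -/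
noncomputable def hessDet (a b c x y : ℝ) : ℝ :=
  Hxx a b c x y * Hyy a b c x y - (Hxy a b c x y) ^ 2

lemma hasDerivAt_Hfun_fst (a b c y u : ℝ) :
    HasDerivAt (fun v => Hfun a b c v y) (2 * u + 4 * a * u ^ 3 + 2 * b * u * y ^ 2) u :=
  (((((hasDerivAt_pow 2 u).sub_const (y ^ 2)).add ((hasDerivAt_pow 4 u).const_mul a)).add_const
      (c * y ^ 4)).add (((hasDerivAt_pow 2 u).const_mul b).mul_const (y ^ 2))).congr_deriv
    (by push_cast; ring)

lemma hasDerivAt_Hfun_snd (a b c x u : ℝ) :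
    HasDerivAt (fun v => Hfun a b c x v) (-2 * u + 4 * c * u ^ 3 + 2 * b * x ^ 2 * u) u :=
  (((((hasDerivAt_pow 2 u).const_sub (x ^ 2)).add_const (a * x ^ 4)).add
      ((hasDerivAt_pow 4 u).const_mul c)).add
        ((hasDerivAt_pow 2 u).const_mul (b * x ^ 2))).congr_deriv (by push_cast; ring)

lemma Hxx_eq (a b c x y : ℝ) : Hxx a b c x y = 2 + 12 * a * x ^ 2 + 2 * b * y ^ 2 := by
  have hfirst :
      deriv (fun v => Hfun a b c v y) = fun u => 2 * u + 4 * a * u ^ 3 + 2 * b * u * y ^ 2 :=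
    funext fun u => (hasDerivAt_Hfun_fst a b c y u).deriv
  rw [Hxx, hfirst]
  exact ((((hasDerivAt_id x).const_mul 2).add ((hasDerivAt_pow 3 x).const_mul (4 * a))).add
    (((hasDerivAt_id x).const_mul (2 * b)).mul_const (y ^ 2))).deriv.trans (by push_cast; ring)

lemma Hyy_eq (a b c x y : ℝ) : Hyy a b c x y = -2 + 12 * c * y ^ 2 + 2 * b * x ^ 2 := by
  have hfirst :
      deriv (fun v => Hfun a b c x v) = fun u => -2 * u + 4 * c * u ^ 3 + 2 * b * x ^ 2 * u :=
    funext fun u => (hasDerivAt_Hfun_snd a b c x u).deriv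
  rw [Hyy, hfirst]
  exact ((((hasDerivAt_id y).const_mul (-2)).add ((hasDerivAt_pow 3 y).const_mul (4 * c))).add
    ((hasDerivAt_id y).const_mul (2 * b * x ^ 2))).deriv.trans (by push_cast; ring)

lemma Hxy_eq (a b c x y : ℝ) : Hxy a b c x y = 4 * b * x * y := by
  have hfirst : (fun u => deriv (fun v => Hfun a b c u v) y)
      = fun u => (-2 * y + 4 * c * y ^ 3) + 2 * b * y * u ^ 2 :=
    funext fun u => (hasDerivAt_Hfun_snd a b c u y).deriv.trans (by ring)
  rw [Hxy, hfirst]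
  exact (((hasDerivAt_pow 2 x).const_mul (2 * b * y)).const_add _).deriv.trans (by push_cast; ring)

lemma hessDet_eq (a b c x y : ℝ) :
    hessDet a b c x y
      = (2 + 12 * a * x ^ 2 + 2 * b * y ^ 2) * (-2 + 12 * c * y ^ 2 + 2 * b * x ^ 2)
        - (4 * b * x * y) ^ 2 := by
  rw [hessDet, Hxx_eq, Hyy_eq, Hxy_eq]

lemma hessDet_zero_of_sq_eq {a b c y : ℝ} (hc : c ≠ 0) (hy : y ^ 2 = 1 / (2 * c)) :
    hessDet a b c 0 y = 4 * (b + 2 * c) / c := by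
  rw [hessDet_eq, hy]
  field_simp
  ring

lemma hessDet_of_sq_eq {a b c x y : ℝ} (hD : b ^ 2 - 4 * a * c ≠ 0)
    (hx : x ^ 2 = (b + 2 * c) / (b ^ 2 - 4 * a * c))
    (hy : y ^ 2 = (b + 2 * a) / (4 * a * c - b ^ 2)) :
    hessDet a b c x y = 16 * (b + 2 * c) * (b + 2 * a) / (b ^ 2 - 4 * a * c) := by
  rw [← neg_sub, div_neg] at hy
  rw [hessDet_eq, mul_pow, mul_pow, mul_pow, hx, hy]
  generalize hE : b ^ 2 - 4 * a * c = E at hD ⊢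
  field_simp
  rw [← hE]
  ring

lemma sq_mul_sqrt_of_sq_eq_one {ε r : ℝ} (hε : ε ^ 2 = 1) (hr : 0 ≤ r) :
    (ε * Real.sqrt r) ^ 2 = r := by
  rw [mul_pow, hε, one_mul, Real.sq_sqrt hr]

theorem stmt10 (a b c : ℝ) (hc : 0 < c) (hD : b ^ 2 - 4 * a * c < 0) (hb2c : b + 2 * c < 0) :
    (hessDet a b c 0 0 = -4 ∧ (-4 : ℝ) < 0) ∧
    (hessDet a b c 0 (1 / Real.sqrt (2 * c)) = 4 * (b + 2 * c) / c ∧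
     hessDet a b c 0 (-(1 / Real.sqrt (2 * c))) = 4 * (b + 2 * c) / c ∧
     4 * (b + 2 * c) / c < 0) ∧
    (∀ ε₁ ε₂ : ℝ, (ε₁ = 1 ∨ ε₁ = -1) → (ε₂ = 1 ∨ ε₂ = -1) →
      0 < hessDet a b c (ε₁ * Real.sqrt ((b + 2 * c) / (b ^ 2 - 4 * a * c)))
            (ε₂ * Real.sqrt ((b + 2 * a) / (4 * a * c - b ^ 2)))) := by
  -- `c (b + 2a) = bc + 2ac > bc + b² / 2 = b (b + 2c) / 2 > 0`, as `b < -2c < 0`.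
  have hb2a : 0 < b + 2 * a := by nlinarith [mul_pos_of_neg_of_neg (by linarith : b < 0) hb2c]
  have hy : (1 / Real.sqrt (2 * c)) ^ 2 = 1 / (2 * c) := by
    rw [div_pow, one_pow, Real.sq_sqrt (by positivity)]
  refine ⟨⟨by rw [hessDet_eq]; ring, by norm_num⟩,
    ⟨hessDet_zero_of_sq_eq hc.ne' hy, hessDet_zero_of_sq_eq hc.ne' (by rw [neg_sq, hy]),
      div_neg_of_neg_of_pos (by linarith) hc⟩, ?_⟩
  have sq_eq_one : ∀ ε : ℝ, (ε = 1 ∨ ε = -1) → ε ^ 2 = 1 := by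
    rintro ε (rfl | rfl) <;> norm_num
  intro ε₁ ε₂ hε₁ hε₂
  rw [hessDet_of_sq_eq hD.ne
    (sq_mul_sqrt_of_sq_eq_one (sq_eq_one ε₁ hε₁) (div_nonneg_of_nonpos hb2c.le hD.le))
    (sq_mul_sqrt_of_sq_eq_one (sq_eq_one ε₂ hε₂) (div_nonneg hb2a.le (by linarith)))]
  exact div_pos_of_neg_of_neg (by nlinarith) hD
end

section
/- (Proposition 3.2, Gavrilov–Iliev) Let J ⊆ ℝ be an open interval, let a₁, a₂, R : J → ℝ be real-analytic, and suppose: (a) there exists a solution x₀ of the homogeneous equation x'' + a₁(t)x' + a₂(t)x = 0 with x₀(t) ≠ 0 for all t ∈ J (so the homogeneous solution space is a Chebyshev space); (b) R is not identically zero and has exactly l zeros in J counted with multiplicity (l finite). Then every solution x : J → ℝ of x'' + a₁(t)x' + a₂(t)x = R(t) has at most l + 2 zeros in J counted with multiplicity. -/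
/-- `f` solves `f'' + a₁ f' + a₂ f = R` on the open set `J`. -/
def IsSolutionOn (J : Set ℝ) (a₁ a₂ R f : ℝ → ℝ) : Prop :=
  (∀ t ∈ J, DifferentiableAt ℝ f t) ∧
  (∀ t ∈ J, DifferentiableAt ℝ (deriv f) t) ∧
  (∀ t ∈ J, deriv (deriv f) t + a₁ t * deriv f t + a₂ t * f t = R t)

/-- Vanishing order of `f` at `t`: the least `k` with `f⁽ᵏ⁾(t) ≠ 0`
(equals the multiplicity of the zero `t` when `f(t) = 0`, and `0` otherwise). -/
noncomputable def zeroOrder (f : ℝ → ℝ) (t : ℝ) : ℕ :=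
  sInf {k : ℕ | iteratedDeriv k f t ≠ 0}

/-- `f` has exactly `l` zeros in `J`, counted with multiplicity. -/
def ZerosCountEq (J : Set ℝ) (f : ℝ → ℝ) (l : ℕ) : Prop :=
  ∃ Z : Finset ℝ, (∀ t : ℝ, t ∈ Z ↔ t ∈ J ∧ f t = 0) ∧ ∑ t ∈ Z, zeroOrder f t = l

/-- `f` has at most `l` zeros in `J`, counted with multiplicity. -/
def ZerosCountLE (J : Set ℝ) (f : ℝ → ℝ) (l : ℕ) : Prop :=
  ∃ Z : Finset ℝ, (∀ t : ℝ, t ∈ Z ↔ t ∈ J ∧ f t = 0) ∧ ∑ t ∈ Z, zeroOrder f t ≤ l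

/-! Write `x = x₀ y`. If `A' = a₁`, then `W = e^A x₀² y' = e^A (x₀ x' - x x₀')` satisfies
`W' = e^A x₀ R`. Multiplying by a smooth nonvanishing function preserves multiplicities of zeros,
and differentiating loses at most one zero (Rolle, with multiplicities), so `l + 3` zeros of `x`
would give `l + 1` zeros of `R`. -/

open Set Topology
open scoped ContDiff

def VanishesToOrder (f : ℝ → ℝ) (t : ℝ) (m : ℕ) : Prop :=
  ∀ k < m, iteratedDeriv k f t = 0

section VanishesToOrder

variable {f g : ℝ → ℝ} {t : ℝ} {m : ℕ}

theorem vanishesToOrder_one : VanishesToOrder f t 1 ↔ f t = 0 := by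
  simp [VanishesToOrder]

theorem VanishesToOrder.apply_eq_zero (h : VanishesToOrder f t m) (hm : 0 < m) : f t = 0 := by
  simpa using h 0 hm

theorem VanishesToOrder.deriv (h : VanishesToOrder f t m) :
    VanishesToOrder (deriv f) t (m - 1) := fun k hk => by
  rw [← iteratedDeriv_succ']
  exact h (k + 1) (by omega)

theorem VanishesToOrder.congr (h : VanishesToOrder f t m) (hfg : f =ᶠ[𝓝 t] g) :
    VanishesToOrder g t m := fun k hk => by
  rw [← hfg.iteratedDeriv_eq k]
  exact h k hk

theorem VanishesToOrder.mul_left (h : VanishesToOrder f t m) (hg : ContDiffAt ℝ m g t)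
    (hf : ContDiffAt ℝ m f t) : VanishesToOrder (fun s => g s * f s) t m := fun k hk => by
  have hk' : (k : WithTop ℕ∞) ≤ m := by exact_mod_cast hk.le
  rw [iteratedDeriv_fun_mul (hg.of_le hk') (hf.of_le hk')]
  exact Finset.sum_eq_zero fun i _ => by rw [h (k - i) (by omega), mul_zero]

theorem vanishesToOrder_zeroOrder (f : ℝ → ℝ) (t : ℝ) : VanishesToOrder f t (zeroOrder f t) :=
  fun _ hk => not_not.1 (Nat.notMem_of_lt_sInf hk)

theorem VanishesToOrder.le_zeroOrder (h : VanishesToOrder f t m)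
    (hf : ∃ k, iteratedDeriv k f t ≠ 0) : m ≤ zeroOrder f t :=
  le_csInf hf fun k hk => not_lt.1 fun hkm => hk (h k hkm)

theorem apply_eq_zero_of_zeroOrder_ne_zero (h : zeroOrder f t ≠ 0) : f t = 0 := by
  by_contra hft
  exact h (Nat.eq_zero_of_le_zero (Nat.sInf_le (by simpa using hft)))

theorem AnalyticAt.exists_iteratedDeriv_ne_zero (hf : AnalyticAt ℝ f t)
    (h : analyticOrderAt f t ≠ ⊤) : ∃ k, iteratedDeriv k f t ≠ 0 := by
  obtain ⟨n, hn⟩ := ENat.ne_top_iff_exists.1 h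
  exact ⟨n, ((analyticOrderAt_eq_nat_iff_iteratedDeriv_eq_zero hf).1 hn.symm).2⟩

end VanishesToOrder

def ZerosCountGE (J : Set ℝ) (f : ℝ → ℝ) (n : ℕ) : Prop :=
  ∃ (Z : Finset ℝ) (m : ℝ → ℕ), ↑Z ⊆ J ∧ (∀ t ∈ Z, VanishesToOrder f t (m t)) ∧
    n ≤ ∑ t ∈ Z, m t

theorem exists_finset_deriv_eq_zero {J : Set ℝ} (hJ : J.OrdConnected) {f : ℝ → ℝ}
    (hf : ContinuousOn f J) (Z : Finset ℝ) (hZJ : ↑Z ⊆ J) (hZ : ∀ t ∈ Z, f t = 0) :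
    ∃ C : Finset ℝ, ↑C ⊆ J ∧ Disjoint Z C ∧ Z.card ≤ C.card + 1 ∧
      (∀ c ∈ C, ∃ z ∈ Z, c < z) ∧ ∀ c ∈ C, deriv f c = 0 := by
  classical
  induction Z using Finset.induction_on_max with
  | empty => exact ⟨∅, by simp⟩
  | insert a s hlt ih =>
    obtain ⟨C, hCJ, hdisj, hcard, hCZ, hC⟩ :=
      ih (subset_trans (by simp) hZJ) fun t ht => hZ t (Finset.mem_insert_of_mem ht)
    have haJ : a ∈ J := hZJ (by simp)
    have hCa : ∀ c ∈ C, c < a := fun c hc => by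
      obtain ⟨z, hz, hcz⟩ := hCZ c hc
      exact hcz.trans (hlt z hz)
    rcases s.eq_empty_or_nonempty with rfl | hs
    · refine ⟨C, hCJ, ?_, by simp, fun c hc => ⟨a, by simp, hCa c hc⟩, hC⟩
      simpa using fun ha => (hCa a ha).false
    set b := s.max' hs
    have hb : b ∈ s := s.max'_mem hs
    have hIcc : Icc b a ⊆ J := hJ.out (hZJ (by simp [hb])) haJ
    obtain ⟨c, ⟨hbc, hca⟩, hc⟩ := exists_deriv_eq_zero (hlt b hb) (hf.mono hIcc)
      (by rw [hZ b (by simp [hb]), hZ a (by simp)])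
    have hsc : ∀ z ∈ s, z < c := fun z hz => (s.le_max' z hz).trans_lt hbc
    refine ⟨insert c C, ?_, ?_, ?_, ?_, ?_⟩
    · simpa [Set.insert_subset_iff] using ⟨hIcc ⟨hbc.le, hca.le⟩, hCJ⟩
    · refine Finset.disjoint_left.2 fun z hz hzC => ?_
      rcases Finset.mem_insert.1 hz with rfl | hz <;> rcases Finset.mem_insert.1 hzC with rfl | hzC
      · exact hca.false
      · exact (hCa _ hzC).false
      · exact (hsc _ hz).false
      · exact Finset.disjoint_left.1 hdisj hz hzC
    · rw [Finset.card_insert_of_notMem fun ha => (hlt a ha).false,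
        Finset.card_insert_of_notMem fun hc' => ?_]
      · omega
      obtain ⟨z, hz, hcz⟩ := hCZ c hc'
      exact (hsc z hz).not_gt hcz
    · simp only [Finset.forall_mem_insert]
      exact ⟨⟨a, by simp, hca⟩, fun c' hc' => ⟨a, by simp, hCa c' hc'⟩⟩
    · simpa using ⟨hc, hC⟩

namespace ZerosCountGE

variable {J : Set ℝ} {f g : ℝ → ℝ} {n : ℕ}

theorem congr (hJ : IsOpen J) (h : ZerosCountGE J f n) (hfg : EqOn f g J) :
    ZerosCountGE J g n := by
  obtain ⟨Z, m, hZJ, hZ, hn⟩ := h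
  exact ⟨Z, m, hZJ, fun t ht => (hZ t ht).congr (hfg.eventuallyEq_of_mem
    (hJ.mem_nhds (hZJ ht))), hn⟩

theorem mul_left (hJ : IsOpen J) (h : ZerosCountGE J f n) (hg : ContDiffOn ℝ ∞ g J)
    (hf : ContDiffOn ℝ ∞ f J) : ZerosCountGE J (fun s => g s * f s) n := by
  obtain ⟨Z, m, hZJ, hZ, hn⟩ := h
  refine ⟨Z, m, hZJ, fun t ht => (hZ t ht).mul_left ?_ ?_, hn⟩
  · exact (hg.contDiffAt (hJ.mem_nhds (hZJ ht))).of_le (by exact_mod_cast le_top)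
  · exact (hf.contDiffAt (hJ.mem_nhds (hZJ ht))).of_le (by exact_mod_cast le_top)

theorem of_mul_left (hJ : IsOpen J) (h : ZerosCountGE J (fun s => g s * f s) n)
    (hg : ContDiffOn ℝ ∞ g J) (hg₀ : ∀ t ∈ J, g t ≠ 0) (hf : ContDiffOn ℝ ∞ f J) :
    ZerosCountGE J f n :=
  (h.mul_left hJ (hg.inv hg₀) (hg.mul hf)).congr hJ fun t ht => by
    simp [inv_mul_cancel_left₀ (hg₀ t ht)]

-- A zero of order `m` of `f` is one of order `m - 1` of `f'`; Rolle adds a zero of `f'`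
-- between consecutive zeros of `f`.
theorem deriv (hJ : J.OrdConnected) (hf : ContinuousOn f J) (h : ZerosCountGE J f (n + 1)) :
    ZerosCountGE J (deriv f) n := by
  classical
  obtain ⟨Z, m, hZJ, hZ, hn⟩ := h
  set Z₁ := Z.filter (0 < m ·)
  have hZ₁J : ↑Z₁ ⊆ J := subset_trans (Finset.filter_subset _ _) hZJ
  obtain ⟨C, hCJ, hdisj, hcard, -, hC⟩ := exists_finset_deriv_eq_zero hJ hf Z₁ hZ₁J
    fun t ht => (hZ t (Finset.mem_filter.1 ht).1).apply_eq_zero (Finset.mem_filter.1 ht).2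
  refine ⟨Z₁ ∪ C, fun t => if t ∈ C then 1 else m t - 1, by simp [hZ₁J, hCJ], ?_, ?_⟩
  · intro t ht
    by_cases htC : t ∈ C
    · simpa [htC, vanishesToOrder_one] using hC t htC
    · simp only [htC, if_false]
      have htZ₁ : t ∈ Z₁ := by simpa [htC] using ht
      exact (hZ t (Finset.mem_filter.1 htZ₁).1).deriv
  · have hsum : ∑ t ∈ Z, m t = ∑ t ∈ Z₁, m t := by
      rw [Finset.sum_filter_of_ne fun t _ h => Nat.pos_of_ne_zero h]
    have hZ₁ : ∑ t ∈ Z₁, m t = ∑ t ∈ Z₁, (m t - 1) + Z₁.card := by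
      rw [Finset.card_eq_sum_ones, ← Finset.sum_add_distrib]
      exact Finset.sum_congr rfl fun t ht => by have := (Finset.mem_filter.1 ht).2; omega
    rw [Finset.sum_union hdisj, Finset.sum_congr rfl fun t (ht : t ∈ C) => if_pos ht,
      Finset.sum_congr rfl fun t (ht : t ∈ Z₁) => if_neg (Finset.disjoint_left.1 hdisj ht)]
    simp only [Finset.sum_const, smul_eq_mul, mul_one]
    omega

end ZerosCountGE

theorem ZerosCountGE.le_of_zerosCountEq {J : Set ℝ} {f : ℝ → ℝ} {n l : ℕ}
    (hf : AnalyticOnNhd ℝ f J) (hJ : IsPreconnected J) (hf₀ : ∃ t ∈ J, f t ≠ 0)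
    (h : ZerosCountGE J f n) (hl : ZerosCountEq J f l) : n ≤ l := by
  obtain ⟨t₀, ht₀, hft₀⟩ := hf₀
  obtain ⟨Z, m, hZJ, hZ, hn⟩ := h
  obtain ⟨Z₀, hZ₀, rfl⟩ := hl
  have hm : ∀ t ∈ Z, m t ≤ zeroOrder f t := fun t ht =>
    (hZ t ht).le_zeroOrder <| (hf t (hZJ ht)).exists_iteratedDeriv_ne_zero <|
      hf.analyticOrderAt_ne_top_of_isPreconnected hJ ht₀ (hZJ ht) <| by
        simp [analyticOrderAt_eq_zero.2 (Or.inr hft₀)]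
  calc n ≤ ∑ t ∈ Z, m t := hn
    _ ≤ ∑ t ∈ Z, zeroOrder f t := Finset.sum_le_sum hm
    _ ≤ ∑ t ∈ Z₀, zeroOrder f t := Finset.sum_le_sum_of_ne_zero fun t ht h =>
      (hZ₀ t).2 ⟨hZJ ht, apply_eq_zero_of_zeroOrder_ne_zero h⟩

theorem zerosCountLE_of_not_zerosCountGE {J : Set ℝ} {f : ℝ → ℝ} {n : ℕ}
    (h : ¬ ZerosCountGE J f (n + 1)) : ZerosCountLE J f n := by
  have hfin : {t | t ∈ J ∧ f t = 0}.Finite := by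
    by_contra hinf
    obtain ⟨T, hTsub, hTcard⟩ := Set.Infinite.exists_subset_card_eq hinf (n + 1)
    refine h ⟨T, fun _ => 1, fun t ht => (hTsub ht).1, fun t ht => ?_, by simp [hTcard]⟩
    exact vanishesToOrder_one.2 (hTsub ht).2
  refine ⟨hfin.toFinset, by simp, not_lt.1 fun hlt => h ?_⟩
  exact ⟨hfin.toFinset, zeroOrder f, fun t ht => (hfin.mem_toFinset.1 ht).1,
    fun t _ => vanishesToOrder_zeroOrder f t, hlt⟩

theorem IsSolutionOn.contDiffOn {J : Set ℝ} (hJ : IsOpen J) {a₁ a₂ R x : ℝ → ℝ}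
    (ha₁ : ContDiffOn ℝ ∞ a₁ J) (ha₂ : ContDiffOn ℝ ∞ a₂ J) (hR : ContDiffOn ℝ ∞ R J)
    (hx : IsSolutionOn J a₁ a₂ R x) : ContDiffOn ℝ ∞ x J := by
  obtain ⟨hx₁, hx₂, hxR⟩ := hx
  suffices h : ∀ n : ℕ, ContDiffOn ℝ n x J ∧ ContDiffOn ℝ n (deriv x) J from
    contDiffOn_infty.2 fun n => (h n).1
  intro n
  induction n with
  | zero =>
    simp only [CharP.cast_eq_zero, contDiffOn_zero]
    exact ⟨fun t ht => (hx₁ t ht).continuousAt.continuousWithinAt,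
      fun t ht => (hx₂ t ht).continuousAt.continuousWithinAt⟩
  | succ n ih =>
    have hx'' : ContDiffOn ℝ n (deriv (deriv x)) J :=
      ((contDiffOn_infty.1 hR n).sub ((contDiffOn_infty.1 ha₁ n).mul ih.2) |>.sub
        ((contDiffOn_infty.1 ha₂ n).mul ih.1)).congr fun t ht => by
          have := hxR t ht
          linarith
    simp only [Nat.cast_add, Nat.cast_one, contDiffOn_succ_iff_deriv_of_isOpen hJ]
    exact ⟨⟨fun t ht => (hx₁ t ht).differentiableWithinAt, by simp, ih.2⟩,
      ⟨fun t ht => (hx₂ t ht).differentiableWithinAt, by simp, hx''⟩⟩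

theorem ContinuousOn.exists_hasDerivAt {J : Set ℝ} (hJo : IsOpen J) (hJ : J.OrdConnected)
    {a : ℝ → ℝ} (ha : ContinuousOn a J) {t₀ : ℝ} (ht₀ : t₀ ∈ J) :
    ∃ A : ℝ → ℝ, ∀ t ∈ J, HasDerivAt A (a t) t :=
  ⟨fun t => ∫ s in t₀..t, a s, fun t ht =>
    intervalIntegral.integral_hasDerivAt_right ((ha.mono (hJ.uIcc_subset ht₀ ht)).intervalIntegrable)
      (ha.stronglyMeasurableAtFilter hJo t ht) (ha.continuousAt (hJo.mem_nhds ht))⟩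

section Wronskian

variable {J : Set ℝ} {a₁ a₂ R A x₀ x : ℝ → ℝ} {t : ℝ}

theorem IsSolutionOn.hasDerivAt_exp_mul_wronskian (hx₀ : IsSolutionOn J a₁ a₂ (fun _ => 0) x₀)
    (hx : IsSolutionOn J a₁ a₂ R x) (hA : HasDerivAt A (a₁ t) t) (ht : t ∈ J) :
    HasDerivAt (fun s => Real.exp (A s) * (x₀ s * deriv x s - x s * deriv x₀ s))
      (Real.exp (A t) * x₀ t * R t) t := by
  refine (hA.exp.fun_mul (((hx₀.1 t ht).hasDerivAt.fun_mul (hx.2.1 t ht).hasDerivAt).fun_sub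
    ((hx.1 t ht).hasDerivAt.fun_mul (hx₀.2.1 t ht).hasDerivAt))).congr_deriv ?_
  have h₀ := hx₀.2.2 t ht
  have h := hx.2.2 t ht
  linear_combination (Real.exp (A t) * x₀ t) * h - (Real.exp (A t) * x t) * h₀

theorem exp_mul_wronskian_eq (hx₀ : DifferentiableAt ℝ x₀ t) (hx : DifferentiableAt ℝ x t)
    (hx₀t : x₀ t ≠ 0) :
    Real.exp (A t) * (x₀ t * deriv x t - x t * deriv x₀ t)
      = Real.exp (A t) * x₀ t ^ 2 * deriv (fun s => (x₀ s)⁻¹ * x s) t := by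
  rw [((hx₀.hasDerivAt.fun_inv hx₀t).fun_mul hx.hasDerivAt).deriv]
  field_simp
  ring

end Wronskian

theorem stmt12 (J : Set ℝ) (hJo : IsOpen J) (hJc : Convex ℝ J)
    (a₁ a₂ R : ℝ → ℝ)
    (ha₁ : AnalyticOnNhd ℝ a₁ J) (ha₂ : AnalyticOnNhd ℝ a₂ J) (hR : AnalyticOnNhd ℝ R J)
    (x₀ : ℝ → ℝ) (hx₀sol : IsSolutionOn J a₁ a₂ (fun _ => 0) x₀)
    (hx₀ne : ∀ t ∈ J, x₀ t ≠ 0)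
    (hRne : ∃ t ∈ J, R t ≠ 0)
    (l : ℕ) (hRzeros : ZerosCountEq J R l) :
    ∀ x : ℝ → ℝ, IsSolutionOn J a₁ a₂ R x → ZerosCountLE J x (l + 2) := by
  intro x hx
  have hJ : J.OrdConnected := hJc.ordConnected
  have ha₁' : ContDiffOn ℝ ∞ a₁ J := ha₁.contDiffOn hJo.uniqueDiffOn
  have hR' : ContDiffOn ℝ ∞ R J := hR.contDiffOn hJo.uniqueDiffOn
  have hx' := hx.contDiffOn hJo ha₁' (ha₂.contDiffOn hJo.uniqueDiffOn) hR'
  have hx₀' := hx₀sol.contDiffOn hJo ha₁' (ha₂.contDiffOn hJo.uniqueDiffOn) contDiffOn_const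
  obtain ⟨A, hA⟩ := ha₁'.continuousOn.exists_hasDerivAt hJo hJ hRne.choose_spec.1
  have hA' : ContDiffOn ℝ ∞ A J := (contDiffOn_infty_iff_deriv_of_isOpen hJo).2
    ⟨fun t ht => (hA t ht).differentiableAt.differentiableWithinAt,
      ha₁'.congr fun t ht => (hA t ht).deriv⟩
  have hy' : ContDiffOn ℝ ∞ (fun s => (x₀ s)⁻¹ * x s) J := (hx₀'.inv hx₀ne).mul hx'
  have hW := fun t ht => hx₀sol.hasDerivAt_exp_mul_wronskian hx (hA t ht) ht
  refine zerosCountLE_of_not_zerosCountGE fun h => ?_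
  have hy : ZerosCountGE J (deriv fun s => (x₀ s)⁻¹ * x s) (l + 2) :=
    (h.mul_left hJo (hx₀'.inv hx₀ne) hx').deriv hJ hy'.continuousOn
  have hW' : ZerosCountGE J (fun s => Real.exp (A s) * x₀ s * R s) (l + 1) :=
    (((hy.mul_left hJo (hA'.exp.mul (hx₀'.pow 2)) (hy'.deriv_of_isOpen hJo le_rfl)).congr hJo
      fun t ht => (exp_mul_wronskian_eq (hx₀sol.1 t ht) (hx.1 t ht) (hx₀ne t ht)).symm).deriv hJ
      fun t ht => (hW t ht).continuousAt.continuousWithinAt).congr hJo fun t ht => (hW t ht).deriv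
  have hRl := (hW'.of_mul_left hJo (hA'.exp.mul hx₀')
    (fun t ht => mul_ne_zero (Real.exp_ne_zero _) (hx₀ne t ht)) hR').le_of_zerosCountEq
      hR hJc.isPreconnected hRne hRzeros
  omega
end

section
/- (Proposition 3.3) Let α < β, let f, f₁, f₂ : (α, β) → ℝ be real-analytic with f = f₁ + f₂, and let p₁, p₂, p₃ be real polynomials with p₃ not identically zero. Define the operator L = p₃(t)·d²/dt² + p₂(t)·d/dt + p₁(t) and set r = L f. Assume L f₁ = 0 on (α, β), and that f₁ and r are not identically zero with finitely many zeros in (α, β). Then f is not identically zero, f has finitely many zeros in (α, β), and N(f) ≤ 3·N(p₃) + 3·N(f₁) + N(r) + 2, where N(φ) denotes the number of zeros of φ in (α, β) counted with multiplicity. -/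
/-!
The Wronskian `W = f₁ f' - f₁' f` solves the first-order equation `p₃ W' + p₂ W = f₁ r`, and
`f` solves `f₁ f' - f₁' f = W`. For a first-order equation `P u' + Q u = R`, Rolle's theorem
applied to `u · exp (∫ Q / P)` puts a zero of `R` strictly between any two zeros of `u` that are
not separated by a zero of `P`; moreover the order of a zero of `u` exceeds that of `R` by at most
one, and not at all at zeros of `P`. Hence `N(u) ≤ N(R) + #{P = 0} + 1`, which applied twice
gives `N(W) ≤ N(f₁) + N(r) + N(p₃) + 1` and `N(f) ≤ N(W) + N(f₁) + 1`.
-/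

open Set Filter Topology Finset

section AnalyticOrder

variable {𝕜 : Type*} [NontriviallyNormedField 𝕜] [CompleteSpace 𝕜] [CharZero 𝕜]
  {W P Q R : 𝕜 → 𝕜} {t : 𝕜}

theorem AnalyticAt.analyticOrderAt_le_deriv_add_one (hW : AnalyticAt 𝕜 W t) :
    analyticOrderAt W t ≤ analyticOrderAt (deriv W) t + 1 := by
  by_cases h0 : W t = 0
  · simp [hW.analyticOrderAt_deriv_add_one, h0]
  · simp [analyticOrderAt_eq_zero.2 (Or.inr h0)]

theorem AnalyticAt.analyticOrderAt_le_of_eq_mul_deriv_add_mul (hW : AnalyticAt 𝕜 W t)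
    (hP : AnalyticAt 𝕜 P t) (hQ : AnalyticAt 𝕜 Q t)
    (hR : R =ᶠ[𝓝 t] fun x => P x * deriv W x + Q x * W x) :
    analyticOrderAt W t ≤ analyticOrderAt R t + 1 := by
  have hmin := le_analyticOrderAt_add (f := P * deriv W) (g := Q * W) (z₀ := t)
  rw [analyticOrderAt_mul hP hW.deriv, analyticOrderAt_mul hQ hW] at hmin
  rw [analyticOrderAt_congr hR]
  calc analyticOrderAt W t
      ≤ min (analyticOrderAt (deriv W) t) (analyticOrderAt W t) + 1 := by
        rw [← min_add_add_right]
        exact le_min hW.analyticOrderAt_le_deriv_add_one le_self_add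
    _ ≤ analyticOrderAt (P * deriv W + Q * W) t + 1 := by
        gcongr
        exact (min_le_min le_add_self le_add_self).trans hmin

theorem AnalyticAt.analyticOrderAt_le_of_eq_mul_deriv_add_mul_of_eq_zero (hW : AnalyticAt 𝕜 W t)
    (hP : AnalyticAt 𝕜 P t) (hQ : AnalyticAt 𝕜 Q t) (hP0 : P t = 0)
    (hR : R =ᶠ[𝓝 t] fun x => P x * deriv W x + Q x * W x) :
    analyticOrderAt W t ≤ analyticOrderAt R t := by
  have hmin := le_analyticOrderAt_add (f := P * deriv W) (g := Q * W) (z₀ := t)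
  rw [analyticOrderAt_mul hP hW.deriv, analyticOrderAt_mul hQ hW] at hmin
  rw [analyticOrderAt_congr hR]
  have hP1 : 1 ≤ analyticOrderAt P t :=
    Order.one_le_iff_ne_zero.2 (analyticOrderAt_ne_zero.2 ⟨hP, hP0⟩)
  refine le_trans (le_min ?_ le_add_self) hmin
  calc analyticOrderAt W t ≤ analyticOrderAt (deriv W) t + 1 :=
        hW.analyticOrderAt_le_deriv_add_one
    _ ≤ analyticOrderAt P t + analyticOrderAt (deriv W) t := by rw [add_comm]; gcongr

end AnalyticOrder

section ZeroOrder

variable {f : ℝ → ℝ} {t : ℝ}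

theorem AnalyticAt.zeroOrder_eq (hf : AnalyticAt ℝ f t) :
    zeroOrder f t = analyticOrderNatAt f t := by
  cases h : analyticOrderAt f t with
  | top =>
    have hzero (k : ℕ) : iteratedDeriv k f t = 0 :=
      (natCast_le_analyticOrderAt_iff_iteratedDeriv_eq_zero hf).1 (by simp [h]) k k.lt_succ_self
    simp [zeroOrder, hzero, analyticOrderNatAt, h]
  | coe n =>
    obtain ⟨hlt, hn⟩ := (analyticOrderAt_eq_nat_iff_iteratedDeriv_eq_zero hf).1 h
    rw [analyticOrderNatAt, h, ENat.toNat_natCast]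
    exact le_antisymm (Nat.sInf_le hn)
      (le_csInf ⟨n, hn⟩ fun k hk => not_lt.1 fun hkn => hk (hlt k hkn))

theorem AnalyticAt.natCast_zeroOrder (hf : AnalyticAt ℝ f t) (h : analyticOrderAt f t ≠ ⊤) :
    (zeroOrder f t : ℕ∞) = analyticOrderAt f t := by
  rw [hf.zeroOrder_eq, Nat.cast_analyticOrderNatAt h]

theorem AnalyticAt.zeroOrder_pos (hf : AnalyticAt ℝ f t) (h : analyticOrderAt f t ≠ ⊤)
    (h0 : f t = 0) : 0 < zeroOrder f t := by
  have := analyticOrderAt_ne_zero.2 ⟨hf, h0⟩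
  rw [← hf.natCast_zeroOrder h] at this
  exact Nat.pos_of_ne_zero (by exact_mod_cast this)

theorem zeroOrder_eq_zero_of_ne_zero (h : f t ≠ 0) : zeroOrder f t = 0 :=
  Nat.sInf_eq_zero.2 (Or.inl (by simpa using h))

theorem analyticOrderAt_ne_top_of_zeros_subset {J : Set ℝ} {Z : Finset ℝ} (hJ : IsOpen J)
    (hZ : ∀ s ∈ J, f s = 0 → s ∈ Z) (ht : t ∈ J) : analyticOrderAt f t ≠ ⊤ := by
  intro htop
  have hmem : (Z : Set ℝ) ∈ 𝓝 t := by
    filter_upwards [analyticOrderAt_eq_top.1 htop, hJ.mem_nhds ht] with s hs hsJ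
    exact hZ s hsJ hs
  obtain ⟨l, u, ⟨hl, hu⟩, hsub⟩ := mem_nhds_iff_exists_Ioo_subset.1 hmem
  exact (Ioo_infinite (hl.trans hu)).mono hsub Z.finite_toSet

theorem card_le_sum_zeroOrder {J : Set ℝ} {Z : Finset ℝ} (hJ : IsOpen J)
    (hf : AnalyticOnNhd ℝ f J) (hZ : ∀ s, s ∈ Z ↔ s ∈ J ∧ f s = 0) :
    #Z ≤ ∑ s ∈ Z, zeroOrder f s := by
  rw [card_eq_sum_ones]
  refine sum_le_sum fun s hs => ?_
  obtain ⟨hsJ, h0⟩ := (hZ s).1 hs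
  exact (hf s hsJ).zeroOrder_pos
    (analyticOrderAt_ne_top_of_zeros_subset hJ (fun x hx h => (hZ x).2 ⟨hx, h⟩) hsJ) h0

theorem ZerosCountLE.mono {J : Set ℝ} {l l' : ℕ} (h : ZerosCountLE J f l)
    (hl : l ≤ l') : ZerosCountLE J f l' :=
  let ⟨Z, hZ, hsum⟩ := h
  ⟨Z, hZ, hsum.trans hl⟩

theorem ZerosCountLE.exists_ne_zero {J : Set ℝ} {l : ℕ} (h : ZerosCountLE J f l)
    (hJ : J.Infinite) : ∃ t ∈ J, f t ≠ 0 := by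
  obtain ⟨Z, hZ, -⟩ := h
  by_contra! h0
  exact hJ (Z.finite_toSet.subset fun t ht => (hZ t).2 ⟨ht, h0 t ht⟩)

theorem sum_zeroOrder_mul {g : ℝ → ℝ} {J : Set ℝ} {Z₁ Z₂ : Finset ℝ} (hJ : IsOpen J)
    (hf : AnalyticOnNhd ℝ f J) (hg : AnalyticOnNhd ℝ g J)
    (hZ₁ : ∀ t, t ∈ Z₁ ↔ t ∈ J ∧ f t = 0) (hZ₂ : ∀ t, t ∈ Z₂ ↔ t ∈ J ∧ g t = 0) :
    ∑ t ∈ Z₁ ∪ Z₂, zeroOrder (f * g) t = ∑ t ∈ Z₁, zeroOrder f t + ∑ t ∈ Z₂, zeroOrder g t := by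
  have hJZ {t : ℝ} (ht : t ∈ Z₁ ∪ Z₂) : t ∈ J := by
    rcases mem_union.1 ht with ht | ht
    exacts [((hZ₁ t).1 ht).1, ((hZ₂ t).1 ht).1]
  have hmul {t : ℝ} (ht : t ∈ J) : zeroOrder (f * g) t = zeroOrder f t + zeroOrder g t := by
    rw [((hf t ht).mul (hg t ht)).zeroOrder_eq, (hf t ht).zeroOrder_eq, (hg t ht).zeroOrder_eq,
      analyticOrderNatAt_mul (hf t ht) (hg t ht)
        (analyticOrderAt_ne_top_of_zeros_subset hJ (fun s hs h => (hZ₁ s).2 ⟨hs, h⟩) ht)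
        (analyticOrderAt_ne_top_of_zeros_subset hJ (fun s hs h => (hZ₂ s).2 ⟨hs, h⟩) ht)]
  rw [sum_congr rfl fun t ht => hmul (hJZ ht), sum_add_distrib,
    sum_subset subset_union_left fun t ht ht₁ => zeroOrder_eq_zero_of_ne_zero
      fun h => ht₁ ((hZ₁ t).2 ⟨hJZ ht, h⟩),
    sum_subset subset_union_right fun t ht ht₂ => zeroOrder_eq_zero_of_ne_zero
      fun h => ht₂ ((hZ₂ t).2 ⟨hJZ ht, h⟩)]

end ZeroOrder

theorem exists_mul_deriv_add_mul_eq_zero {P Q W W' : ℝ → ℝ} {x y : ℝ} (hxy : x < y)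
    (hP : ContinuousOn P (Icc x y)) (hQ : ContinuousOn Q (Icc x y))
    (hP0 : ∀ s ∈ Icc x y, P s ≠ 0) (hW : ContinuousOn W (Icc x y))
    (hW' : ∀ s ∈ Ioo x y, HasDerivAt W (W' s) s) (hWx : W x = 0) (hWy : W y = 0) :
    ∃ c ∈ Ioo x y, P c * W' c + Q c * W c = 0 := by
  set q : ℝ → ℝ := fun s => Q s / P s
  have hq : ContinuousOn q (Icc x y) := hQ.div hP hP0
  set v : ℝ → ℝ := fun s => ∫ u in x..s, q u
  have hv : ContinuousOn v (Icc x y) := by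
    simpa [uIcc_of_le hxy.le] using
      intervalIntegral.continuousOn_primitive_interval (hq.integrableOn_Icc.mono_set
        (uIcc_of_le hxy.le).subset)
  have hv' (s : ℝ) (hs : s ∈ Ioo x y) : HasDerivAt v (q s) s :=
    intervalIntegral.integral_hasDerivAt_right
      ((hq.mono (Icc_subset_Icc_right hs.2.le)).intervalIntegrable_of_Icc hs.1.le)
      ((hq.mono Ioo_subset_Icc_self).stronglyMeasurableAtFilter isOpen_Ioo s hs)
      (hq.continuousAt (Icc_mem_nhds hs.1 hs.2))
  obtain ⟨c, hc, hc0⟩ := exists_hasDerivAt_eq_zero (f := fun s => Real.exp (v s) * W s) hxy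
    (hv.rexp.mul hW) (by simp [hWx, hWy]) fun s hs => ((hv' s hs).exp.mul (hW' s hs))
  refine ⟨c, hc, ?_⟩
  have hPc := hP0 c (Ioo_subset_Icc_self hc)
  have hc1 : W' c + q c * W c = 0 := by
    have h : Real.exp (v c) * (W' c + q c * W c) = 0 := by linear_combination hc0
    exact (mul_eq_zero.1 h).resolve_left (Real.exp_ne_zero _)
  calc P c * W' c + Q c * W c = P c * (W' c + q c * W c) := by simp only [q]; field_simp
    _ = 0 := by rw [hc1, mul_zero]

theorem exists_card_le_of_forall_exists_mem_Ioo {α : Type*} [LinearOrder α] {p : α → Prop}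
    (D T : Finset α)
    (h : ∀ x ∈ D, ∀ y ∈ D, x < y → (∀ τ ∈ T, τ ∉ Ioo x y) → ∃ c ∈ Ioo x y, p c) :
    ∃ E : Finset α, (∀ e ∈ E, p e ∧ e ∉ D ∧ e ∉ T) ∧ #D ≤ #E + #T + 1 := by
  classical
  suffices key : ∀ D T : Finset α,
      (∀ x ∈ D, ∀ y ∈ D, x < y → (∀ τ ∈ T, τ ∉ Ioo x y) → ∃ c ∈ Ioo x y, p c) →
      ∃ E : Finset α, (∀ e ∈ E, p e ∧ e ∉ D ∧ e ∉ T ∧ ∃ d ∈ D, e < d) ∧ #D ≤ #E + #T + 1 by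
    obtain ⟨E, hE, hcard⟩ := key D T h
    exact ⟨E, fun e he => ⟨(hE e he).1, (hE e he).2.1, (hE e he).2.2.1⟩, hcard⟩
  clear h
  intro D
  induction D using Finset.induction_on_max with
  | empty => exact fun T _ => ⟨∅, by simp, by simp⟩
  | insert a s has ih =>
    intro T h
    rcases s.eq_empty_or_nonempty with rfl | hs
    · exact ⟨∅, by simp, by simp⟩
    -- Treat the gap between `a` and the previous point `m`: it either yields a new point `c`
    -- or contains a point of `T`, which is then not needed for the remaining gaps.
    set m := s.max' hs
    have hm : m ∈ s := s.max'_mem hs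
    have hma : m < a := has m hm
    have hs_le (x : α) (hx : x ∈ s) : x ≤ m := s.le_max' x hx
    have ha : a ∉ s := fun h => lt_irrefl a (has a h)
    by_cases hT : ∀ τ ∈ T, τ ∉ Ioo m a
    · obtain ⟨c, hc, hpc⟩ := h m (mem_insert_of_mem hm) a (mem_insert_self a s) hma hT
      obtain ⟨E, hE, hcard⟩ :=
        ih T fun x hx y hy => h x (mem_insert_of_mem hx) y (mem_insert_of_mem hy)
      have hcE : c ∉ E := fun hcE => by
        obtain ⟨-, -, -, d, hd, hcd⟩ := hE c hcE
        exact (hcd.trans_le (hs_le d hd)).not_gt hc.1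
      refine ⟨insert c E, fun e he => ?_, ?_⟩
      · rcases Finset.mem_insert.1 he with rfl | he
        · refine ⟨hpc, ?_, fun heT => hT e heT hc, a, mem_insert_self a s, hc.2⟩
          simp only [Finset.mem_insert, not_or]
          exact ⟨hc.2.ne, fun hes => (hs_le e hes).not_gt hc.1⟩
        · obtain ⟨hpe, heD, heT, d, hd, hed⟩ := hE e he
          refine ⟨hpe, ?_, heT, d, mem_insert_of_mem hd, hed⟩
          simp only [Finset.mem_insert, not_or]
          exact ⟨(hed.trans ((hs_le d hd).trans_lt hma)).ne, heD⟩
      · rw [card_insert_of_notMem ha, card_insert_of_notMem hcE]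
        omega
    · push Not at hT
      obtain ⟨τ, hτ, hτI⟩ := hT
      obtain ⟨E, hE, hcard⟩ := ih (T.erase τ) fun x hx y hy hxy hT' =>
        h x (mem_insert_of_mem hx) y (mem_insert_of_mem hy) hxy fun σ hσ hσI =>
          hT' σ (mem_erase.2 ⟨by rintro rfl; exact (hσI.2.trans_le (hs_le y hy)).not_gt hτI.1, hσ⟩)
            hσI
      refine ⟨E, fun e he => ?_, ?_⟩
      · obtain ⟨hpe, heD, heT, d, hd, hed⟩ := hE e he
        have hem : e < m := hed.trans_le (hs_le d hd)
        refine ⟨hpe, ?_, fun heT' => heT (mem_erase.2 ⟨(hem.trans hτI.1).ne, heT'⟩),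
          d, mem_insert_of_mem hd, hed⟩
        simp only [Finset.mem_insert, not_or]
        exact ⟨(hem.trans hma).ne, heD⟩
      · rw [card_insert_of_notMem ha, ← card_erase_add_one hτ]
        omega

theorem zerosCountLE_of_forall_exists_mem_Ioo {φ : ℝ → ℝ} {J : Set ℝ} {T Y : Finset ℝ}
    {w : ℝ → ℕ} (hJ : J.OrdConnected) (hY : ∀ t ∈ J, w t ≠ 0 → t ∈ Y)
    (hord : ∀ t ∈ J, φ t = 0 → zeroOrder φ t ≤ w t + 1)
    (hordT : ∀ t ∈ J, φ t = 0 → t ∈ T → zeroOrder φ t ≤ w t)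
    (hgap : ∀ x ∈ J, ∀ y ∈ J, x < y → φ x = 0 → φ y = 0 → (∀ τ ∈ T, τ ∉ Icc x y) →
      ∃ c ∈ Ioo x y, w c ≠ 0) :
    ZerosCountLE J φ (∑ t ∈ Y, w t + #T + 1) := by
  classical
  set S := {t | t ∈ J ∧ φ t = 0}
  have key (D : Finset ℝ) (hD : ∀ x ∈ D, x ∈ S ∧ x ∉ T) :
      ∃ E : Finset ℝ, (∀ e ∈ E, e ∈ J ∧ w e ≠ 0 ∧ e ∉ D ∧ e ∉ T) ∧ #D ≤ #E + #T + 1 := by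
    obtain ⟨E, hE, hcard⟩ :=
      exists_card_le_of_forall_exists_mem_Ioo (p := fun c => c ∈ J ∧ w c ≠ 0) D T
        fun x hx y hy hxy hT => by
          obtain ⟨⟨hxJ, hx0⟩, hxT⟩ := hD x hx
          obtain ⟨⟨hyJ, hy0⟩, hyT⟩ := hD y hy
          have hT' : ∀ τ ∈ T, τ ∉ Icc x y := fun τ hτ hτI => by
            rcases hτI.1.eq_or_lt with rfl | h1
            · exact hxT hτ
            rcases hτI.2.eq_or_lt with rfl | h2
            · exact hyT hτ
            exact hT τ hτ ⟨h1, h2⟩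
          obtain ⟨c, hc, hwc⟩ := hgap x hxJ y hyJ hxy hx0 hy0 hT'
          exact ⟨c, hc, hJ.out hxJ hyJ (Ioo_subset_Icc_self hc), hwc⟩
    exact ⟨E, fun e he => ⟨(hE e he).1.1, (hE e he).1.2, (hE e he).2⟩, hcard⟩
  have hEY {D E : Finset ℝ} (hE : ∀ e ∈ E, e ∈ J ∧ w e ≠ 0 ∧ e ∉ D ∧ e ∉ T) : E ⊆ Y :=
    fun e he => hY e (hE e he).1 (hE e he).2.1
  have hfin : S.Finite := by
    have hST : (S \ T).Finite := by
      by_contra hinf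
      obtain ⟨D, hDS, hD⟩ := Set.Infinite.exists_subset_card_eq hinf (#Y + #T + 2)
      obtain ⟨E, hE, hcard⟩ := key D fun x hx => hDS hx
      have := Finset.card_le_card (hEY hE)
      omega
    exact (hST.union T.finite_toSet).subset (by simp)
  set Z := hfin.toFinset
  have hZ (t : ℝ) : t ∈ Z ↔ t ∈ J ∧ φ t = 0 := hfin.mem_toFinset
  refine ⟨Z, hZ, ?_⟩
  obtain ⟨E, hE, hcard⟩ := key {t ∈ Z | t ∉ T} fun x hx => by
    simpa [hZ, S] using hx
  have hZE : Disjoint Z E := disjoint_right.2 fun e he heZ =>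
    (hE e he).2.2.1 (mem_filter.2 ⟨heZ, (hE e he).2.2.2⟩)
  calc ∑ t ∈ Z, zeroOrder φ t ≤ ∑ t ∈ Z, (w t + if t ∉ T then 1 else 0) := by
        refine sum_le_sum fun t ht => ?_
        obtain ⟨htJ, ht0⟩ := (hZ t).1 ht
        split_ifs with hT
        · exact hordT t htJ ht0 hT
        · exact hord t htJ ht0
    _ = ∑ t ∈ Z, w t + #{t ∈ Z | t ∉ T} := by rw [sum_add_distrib, sum_boole, Nat.cast_id]
    _ ≤ ∑ t ∈ Z, w t + (∑ e ∈ E, w e + #T + 1) := by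
        have hEw : #E ≤ ∑ e ∈ E, w e := (card_eq_sum_ones E).trans_le
          (sum_le_sum fun e he => Nat.one_le_iff_ne_zero.2 (hE e he).2.1)
        omega
    _ = ∑ t ∈ Z ∪ E, w t + #T + 1 := by rw [sum_union hZE]; ring
    _ ≤ ∑ t ∈ Y, w t + #T + 1 := by
        gcongr ?_ + _ + _
        refine sum_le_sum_of_ne_zero fun t ht hwt => hY t ?_ hwt
        rcases mem_union.1 ht with ht | ht
        · exact ((hZ t).1 ht).1
        · exact (hE t ht).1

theorem zerosCountLE_of_eq_mul_deriv_add_mul {W P Q R : ℝ → ℝ} {J : Set ℝ} {T Y : Finset ℝ}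
    (hJo : IsOpen J) (hJc : J.OrdConnected)
    (hW : AnalyticOnNhd ℝ W J) (hP : AnalyticOnNhd ℝ P J) (hQ : AnalyticOnNhd ℝ Q J)
    (hR : ∀ t ∈ J, R t = P t * deriv W t + Q t * W t)
    (hT : ∀ t, t ∈ T ↔ t ∈ J ∧ P t = 0) (hY : ∀ t ∈ J, R t = 0 → t ∈ Y) :
    ZerosCountLE J W (∑ t ∈ Y, zeroOrder R t + #T + 1) := by
  have hReq (t : ℝ) (ht : t ∈ J) : R =ᶠ[𝓝 t] fun x => P x * deriv W x + Q x * W x :=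
    eventually_of_mem (hJo.mem_nhds ht) hR
  have hRa : AnalyticOnNhd ℝ R J := fun t ht =>
    (((hP t ht).mul (hW.deriv t ht)).add ((hQ t ht).mul (hW t ht))).congr (hReq t ht).symm
  have hRtop (t : ℝ) (ht : t ∈ J) : analyticOrderAt R t ≠ ⊤ :=
    analyticOrderAt_ne_top_of_zeros_subset hJo hY ht
  have hWle (t : ℝ) (ht : t ∈ J) : analyticOrderAt W t ≤ analyticOrderAt R t + 1 :=
    (hW t ht).analyticOrderAt_le_of_eq_mul_deriv_add_mul (hP t ht) (hQ t ht) (hReq t ht)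
  have hWtop (t : ℝ) (ht : t ∈ J) : analyticOrderAt W t ≠ ⊤ :=
    ne_top_of_le_ne_top (WithTop.add_ne_top.2 ⟨hRtop t ht, ENat.one_ne_top⟩) (hWle t ht)
  have hcast (t : ℝ) (ht : t ∈ J) : (zeroOrder W t : ℕ∞) = analyticOrderAt W t ∧
      (zeroOrder R t : ℕ∞) = analyticOrderAt R t :=
    ⟨(hW t ht).natCast_zeroOrder (hWtop t ht), (hRa t ht).natCast_zeroOrder (hRtop t ht)⟩
  refine zerosCountLE_of_forall_exists_mem_Ioo hJc (fun t ht hRt => hY t ht ?_) ?_ ?_ ?_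
  · exact not_not.1 fun h => hRt (zeroOrder_eq_zero_of_ne_zero h)
  · intro t ht _
    have := hWle t ht
    rw [← (hcast t ht).1, ← (hcast t ht).2] at this
    exact_mod_cast this
  · intro t ht _ htT
    have := (hW t ht).analyticOrderAt_le_of_eq_mul_deriv_add_mul_of_eq_zero (hP t ht) (hQ t ht)
      ((hT t).1 htT).2 (hReq t ht)
    rw [← (hcast t ht).1, ← (hcast t ht).2] at this
    exact_mod_cast this
  · intro x hx y hy hxy hWx hWy hTxy
    have hIcc : Icc x y ⊆ J := hJc.out hx hy
    have hcont {F : ℝ → ℝ} (hF : AnalyticOnNhd ℝ F J) : ContinuousOn F (Icc x y) :=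
      fun s hs => (hF s (hIcc hs)).continuousAt.continuousWithinAt
    obtain ⟨c, hc, hc0⟩ := exists_mul_deriv_add_mul_eq_zero hxy (hcont hP) (hcont hQ)
      (fun s hs hPs => hTxy s ((hT s).2 ⟨hIcc hs, hPs⟩) hs) (hcont hW)
      (fun s hs => (hW s (hIcc (Ioo_subset_Icc_self hs))).differentiableAt.hasDerivAt) hWx hWy
    have hcJ : c ∈ J := hIcc (Ioo_subset_Icc_self hc)
    exact ⟨c, hc, ((hRa c hcJ).zeroOrder_pos (hRtop c hcJ) ((hR c hcJ).trans hc0)).ne'⟩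
noncomputable def wronskian (f g : ℝ → ℝ) (x : ℝ) : ℝ := f x * deriv g x - deriv f x * g x

theorem AnalyticOnNhd.wronskian {f g : ℝ → ℝ} {J : Set ℝ} (hf : AnalyticOnNhd ℝ f J)
    (hg : AnalyticOnNhd ℝ g J) : AnalyticOnNhd ℝ (wronskian f g) J :=
  fun t ht => ((hf t ht).mul (hg.deriv t ht)).sub ((hf.deriv t ht).mul (hg t ht))

theorem deriv_wronskian {f g : ℝ → ℝ} {t : ℝ} (hf : DifferentiableAt ℝ f t)
    (hg : DifferentiableAt ℝ g t) (hf' : DifferentiableAt ℝ (deriv f) t)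
    (hg' : DifferentiableAt ℝ (deriv g) t) :
    deriv (wronskian f g) t = f t * deriv (deriv g) t - deriv (deriv f) t * g t := by
  have := (hf.hasDerivAt.mul hg'.hasDerivAt).sub (hf'.hasDerivAt.mul hg.hasDerivAt)
  rw [show wronskian f g = f * deriv g - deriv f * g from rfl, this.deriv]
  ring

theorem stmt13_general (α β : ℝ) (hαβ : α < β)
    (f f₁ : ℝ → ℝ)
    (hf : AnalyticOnNhd ℝ f (Set.Ioo α β))
    (hf₁ : AnalyticOnNhd ℝ f₁ (Set.Ioo α β))
    (p₁ p₂ p₃ : Polynomial ℝ)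
    (r : ℝ → ℝ)
    (hr : ∀ t ∈ Set.Ioo α β,
      r t = p₃.eval t * deriv (deriv f) t + p₂.eval t * deriv f t + p₁.eval t * f t)
    (hLf₁ : ∀ t ∈ Set.Ioo α β,
      p₃.eval t * deriv (deriv f₁) t + p₂.eval t * deriv f₁ t + p₁.eval t * f₁ t = 0)
    (n₁ n₂ n₃ : ℕ)
    (hn₁ : ZerosCountEq (Set.Ioo α β) f₁ n₁)
    (hn₂ : ZerosCountEq (Set.Ioo α β) r n₂)
    (hn₃ : ZerosCountEq (Set.Ioo α β) (fun t => p₃.eval t) n₃) :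
    (∃ t ∈ Set.Ioo α β, f t ≠ 0) ∧
    ZerosCountLE (Set.Ioo α β) f (3 * n₃ + 3 * n₁ + n₂ + 2) := by
  obtain ⟨Z₁, hZ₁, rfl⟩ := hn₁
  obtain ⟨Z₂, hZ₂, rfl⟩ := hn₂
  obtain ⟨Z₃, hZ₃, rfl⟩ := hn₃
  have hpoly (p : Polynomial ℝ) : AnalyticOnNhd ℝ (fun t => p.eval t) (Ioo α β) :=
    fun t _ => AnalyticOnNhd.eval_polynomial p t (mem_univ t)
  have hra : AnalyticOnNhd ℝ r (Ioo α β) :=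
    ((((hpoly p₃).mul hf.deriv.deriv).add ((hpoly p₂).mul hf.deriv)).add
      ((hpoly p₁).mul hf)).congr isOpen_Ioo fun t ht => (hr t ht).symm
  have hW_eq (t : ℝ) (ht : t ∈ Ioo α β) : (f₁ * r) t =
      p₃.eval t * deriv (wronskian f₁ f) t + p₂.eval t * wronskian f₁ f t := by
    rw [deriv_wronskian (hf₁ t ht).differentiableAt (hf t ht).differentiableAt
      (hf₁.deriv t ht).differentiableAt (hf.deriv t ht).differentiableAt, Pi.mul_apply, hr t ht,
      wronskian]
    linear_combination f t * hLf₁ t ht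
  obtain ⟨ZW, hZW, hNW⟩ := zerosCountLE_of_eq_mul_deriv_add_mul (Y := Z₁ ∪ Z₂) isOpen_Ioo
    ordConnected_Ioo (hf₁.wronskian hf) (hpoly p₃) (hpoly p₂) hW_eq hZ₃ fun t ht h0 => by
      rcases mul_eq_zero.1 h0 with h | h
      exacts [mem_union_left _ ((hZ₁ t).2 ⟨ht, h⟩), mem_union_right _ ((hZ₂ t).2 ⟨ht, h⟩)]
  have hNf := zerosCountLE_of_eq_mul_deriv_add_mul (Q := fun t => -deriv f₁ t) isOpen_Ioo
    ordConnected_Ioo hf hf₁ hf₁.deriv.neg (fun t _ => by rw [wronskian]; ring) hZ₁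
    fun t ht h0 => (hZW t).2 ⟨ht, h0⟩
  have hcard₁ := card_le_sum_zeroOrder isOpen_Ioo hf₁ hZ₁
  have hcard₃ := card_le_sum_zeroOrder isOpen_Ioo (hpoly p₃) hZ₃
  rw [sum_zeroOrder_mul isOpen_Ioo hf₁ hra hZ₁ hZ₂] at hNW
  exact ⟨hNf.exists_ne_zero (Ioo_infinite hαβ), hNf.mono (by omega)⟩

theorem stmt13 (α β : ℝ) (hαβ : α < β)
    (f f₁ f₂ : ℝ → ℝ)
    (hf : AnalyticOnNhd ℝ f (Set.Ioo α β))
    (hf₁ : AnalyticOnNhd ℝ f₁ (Set.Ioo α β))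
    (hf₂ : AnalyticOnNhd ℝ f₂ (Set.Ioo α β))
    (hsum : ∀ t ∈ Set.Ioo α β, f t = f₁ t + f₂ t)
    (p₁ p₂ p₃ : Polynomial ℝ) (hp₃ : p₃ ≠ 0)
    (r : ℝ → ℝ)
    (hr : ∀ t ∈ Set.Ioo α β,
      r t = p₃.eval t * deriv (deriv f) t + p₂.eval t * deriv f t + p₁.eval t * f t)
    (hLf₁ : ∀ t ∈ Set.Ioo α β,
      p₃.eval t * deriv (deriv f₁) t + p₂.eval t * deriv f₁ t + p₁.eval t * f₁ t = 0)
    (hf₁ne : ∃ t ∈ Set.Ioo α β, f₁ t ≠ 0)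
    (hrne : ∃ t ∈ Set.Ioo α β, r t ≠ 0)
    (n₁ n₂ n₃ : ℕ)
    (hn₁ : ZerosCountEq (Set.Ioo α β) f₁ n₁)
    (hn₂ : ZerosCountEq (Set.Ioo α β) r n₂)
    (hn₃ : ZerosCountEq (Set.Ioo α β) (fun t => p₃.eval t) n₃) :
    (∃ t ∈ Set.Ioo α β, f t ≠ 0) ∧
    ZerosCountLE (Set.Ioo α β) f (3 * n₃ + 3 * n₁ + n₂ + 2) :=
  stmt13_general α β hαβ f f₁ hf hf₁ p₁ p₂ p₃ r hr hLf₁ n₁ n₂ n₃ hn₁ hn₂ hn₃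
end
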